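/- arXiv:2106.12847 — 6 statements merged into one kernel-verified Lean document; each statement's English description precedes it below -/
import Mathlib

section
/- For |x| < 1 and |q| < 1, 1/∏_{k≥0}(1 - x q^k) = ∑_{n≥0} x^n / ∏_{k=1}^{n}(1 - q^k). -/
open Finset

open Filter Topology

namespace EulerAux

noncomputable def a (q : ℂ) (n : ℕ) : ℂ := (∏ k ∈ Finset.range n, (1 - q ^ (k + 1)))⁻¹

lemma one_sub_ne {q : ℂ} (h : ‖q‖ < 1) : (1 : ℂ) - q ≠ 0 := by
  intro h0
  have : q = 1 := by linear_combination -h0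
  rw [this] at h; simp at h

lemma a_ne {q : ℂ} (hq : ‖q‖ < 1) (n : ℕ) : a q n ≠ 0 := by
  apply inv_ne_zero
  apply Finset.prod_ne_zero_iff.mpr
  intro k _
  apply one_sub_ne
  rw [norm_pow]
  calc ‖q‖ ^ (k + 1) ≤ ‖q‖ ^ 1 := by
        apply pow_le_pow_of_le_one (norm_nonneg q) hq.le (by omega)
    _ < 1 := by simpa using hq

lemma a_succ {q : ℂ} (hq : ‖q‖ < 1) (n : ℕ) : a q (n + 1) * (1 - q ^ (n + 1)) = a q n := by
  have h1 : (1 : ℂ) - q ^ (n + 1) ≠ 0 := by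
    apply one_sub_ne
    rw [norm_pow]
    calc ‖q‖ ^ (n + 1) ≤ ‖q‖ ^ 1 := by
          apply pow_le_pow_of_le_one (norm_nonneg q) hq.le (by omega)
      _ < 1 := by simpa using hq
  have h2 : (∏ k ∈ Finset.range n, (1 - q ^ (k + 1))) ≠ 0 := by
    apply Finset.prod_ne_zero_iff.mpr
    intro k _
    apply one_sub_ne
    rw [norm_pow]
    calc ‖q‖ ^ (k + 1) ≤ ‖q‖ ^ 1 := by
          apply pow_le_pow_of_le_one (norm_nonneg q) hq.le (by omega)
      _ < 1 := by simpa using hq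
  rw [a, a, Finset.prod_range_succ]
  field_simp

lemma summable_norm {q : ℂ} (hq : ‖q‖ < 1) {y : ℂ} (hy : ‖y‖ < 1) :
    Summable (fun n => ‖y ^ n * a q n‖) := by
  set r := (1 + ‖y‖) / 2 with hr
  have hy0 : 0 ≤ ‖y‖ := norm_nonneg y
  have hr1 : r < 1 := by rw [hr]; linarith
  have hr0 : 0 < r := by rw [hr]; linarith
  have hyr : ‖y‖ < r := by rw [hr]; linarith
  apply summable_of_ratio_norm_eventually_le hr1
  have hq0 : Tendsto (fun n : ℕ => ‖q‖ ^ (n + 1)) atTop (𝓝 0) :=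
    (tendsto_pow_atTop_nhds_zero_of_lt_one (norm_nonneg q) hq).comp (tendsto_add_atTop_nat 1)
  have hev : ∀ᶠ n : ℕ in atTop, ‖q‖ ^ (n + 1) < 1 - ‖y‖ / r := by
    apply hq0.eventually_lt_const
    have : ‖y‖ / r < 1 := (div_lt_one hr0).mpr hyr
    linarith
  filter_upwards [hev] with n hn
  have key : ‖y‖ ≤ r * ‖1 - q ^ (n + 1)‖ := by
    have h1 : 1 - ‖q‖ ^ (n + 1) ≤ ‖(1 : ℂ) - q ^ (n + 1)‖ := by
      calc 1 - ‖q‖ ^ (n + 1) = ‖(1 : ℂ)‖ - ‖q ^ (n + 1)‖ := by simp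
        _ ≤ ‖(1 : ℂ) - q ^ (n + 1)‖ := norm_sub_norm_le _ _
    have h2 : ‖y‖ / r < 1 - ‖q‖ ^ (n + 1) := by linarith
    have := (div_le_iff₀ hr0).mp (le_of_lt (lt_of_lt_of_le h2 h1))
    linarith [this]
  have hrec : ‖y ^ n * a q n‖ = ‖y‖ ^ n * (‖a q (n + 1)‖ * ‖1 - q ^ (n + 1)‖) := by
    rw [← a_succ hq n]
    simp [norm_mul, norm_pow, mul_assoc]
  rw [norm_norm, norm_norm, hrec, norm_mul, norm_pow, pow_succ]
  calc ‖y‖ ^ n * ‖y‖ * ‖a q (n + 1)‖ = ‖y‖ ^ n * (‖y‖ * ‖a q (n + 1)‖) := by ring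
    _ ≤ ‖y‖ ^ n * ((r * ‖1 - q ^ (n + 1)‖) * ‖a q (n + 1)‖) := by
        apply mul_le_mul_of_nonneg_left _ (pow_nonneg hy0 n)
        exact mul_le_mul_of_nonneg_right key (norm_nonneg _)
    _ = r * (‖y‖ ^ n * (‖a q (n + 1)‖ * ‖1 - q ^ (n + 1)‖)) := by ring

lemma summable_f {q : ℂ} (hq : ‖q‖ < 1) {y : ℂ} (hy : ‖y‖ < 1) :
    Summable (fun n => y ^ n * a q n) :=
  (summable_norm hq hy).of_norm


noncomputable def S (q y : ℂ) : ℂ := ∑' n : ℕ, y ^ n * a q n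

lemma feq {q : ℂ} (hq : ‖q‖ < 1) {y : ℂ} (hy : ‖y‖ < 1) :
    S q (q * y) = (1 - y) * S q y := by
  have hqy : ‖q * y‖ < 1 := by
    rw [norm_mul]
    calc ‖q‖ * ‖y‖ ≤ 1 * ‖y‖ := mul_le_mul_of_nonneg_right hq.le (norm_nonneg y)
      _ = ‖y‖ := one_mul _
      _ < 1 := hy
  have hS : HasSum (fun n => y ^ n * a q n) (S q y) := (summable_f hq hy).hasSum
  have hSq : HasSum (fun n => (q * y) ^ n * a q n) (S q (q * y)) := (summable_f hq hqy).hasSum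
  have hg : HasSum (fun n => y ^ n * a q n - (q * y) ^ n * a q n) (S q y - S q (q * y)) :=
    hS.sub hSq
  have hshift : HasSum (fun n => y ^ (n + 1) * a q (n + 1) - (q * y) ^ (n + 1) * a q (n + 1))
      (S q y - S q (q * y)) := by
    refine (hasSum_nat_add_iff (f := fun n => y ^ n * a q n - (q * y) ^ n * a q n) 1).mpr ?_
    simpa [a] using hg
  have hterm : ∀ n : ℕ, y ^ (n + 1) * a q (n + 1) - (q * y) ^ (n + 1) * a q (n + 1)
      = y * (y ^ n * a q n) := by
    intro n
    linear_combination (y ^ (n + 1)) * (a_succ hq n)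
  have hshift' : HasSum (fun n => y * (y ^ n * a q n)) (S q y - S q (q * y)) := by
    refine hshift.congr_fun ?_
    intro n; rw [hterm n]
  have hx' : HasSum (fun n => y * (y ^ n * a q n)) (y * S q y) := hS.mul_left y
  have huniq : S q y - S q (q * y) = y * S q y := hshift'.unique hx'
  linear_combination -huniq

lemma iter {q x : ℂ} (hq : ‖q‖ < 1) (hx : ‖x‖ < 1) (N : ℕ) :
    S q (q ^ N * x) = (∏ k ∈ Finset.range N, (1 - x * q ^ k)) * S q x := by
  induction N with
  | zero => simp
  | succ n ih =>
    have hn : ‖q ^ n * x‖ < 1 := by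
      rw [norm_mul, norm_pow]
      calc ‖q‖ ^ n * ‖x‖ ≤ 1 * ‖x‖ :=
            mul_le_mul_of_nonneg_right (pow_le_one₀ (norm_nonneg q) hq.le) (norm_nonneg x)
        _ = ‖x‖ := one_mul _
        _ < 1 := hx
    rw [Finset.prod_range_succ, show q ^ (n + 1) * x = q * (q ^ n * x) by ring, feq hq hn, ih]
    ring

lemma tendsto_one {q x : ℂ} (hq : ‖q‖ < 1) (hx : ‖x‖ < 1) :
    Tendsto (fun N : ℕ => S q (q ^ N * x)) atTop (𝓝 1) := by
  have hb : Summable (fun n => ‖x ^ n * a q n‖) := summable_norm hq hx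
  have h1 : (1 : ℂ) = ∑' n : ℕ, (if n = 0 then (1 : ℂ) else 0) := by
    rw [tsum_eq_single 0]
    · simp
    · intro b hb; simp [hb]
  rw [show (𝓝 (1 : ℂ)) = 𝓝 (∑' n : ℕ, (if n = 0 then (1 : ℂ) else 0)) by rw [← h1]]
  have : ∀ N : ℕ, S q (q ^ N * x) = ∑' n : ℕ, (q ^ N * x) ^ n * a q n := fun N => rfl
  simp only [this]
  apply tendsto_tsum_of_dominated_convergence hb
  · intro k
    rcases Nat.eq_zero_or_pos k with hk | hk
    · subst hk
      simpa [a] using tendsto_const_nhds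
    · have hk0 : k ≠ 0 := hk.ne'
      simp only [hk0, if_neg, if_false]
      have hqk : ‖q ^ k‖ < 1 := by
        rw [norm_pow]
        calc ‖q‖ ^ k ≤ ‖q‖ ^ 1 := pow_le_pow_of_le_one (norm_nonneg q) hq.le hk
          _ < 1 := by simpa using hq
      have h0 : Tendsto (fun N : ℕ => (q ^ k) ^ N * (x ^ k * a q k)) atTop (𝓝 0) := by
        have := (tendsto_pow_atTop_nhds_zero_of_norm_lt_one hqk).mul_const (x ^ k * a q k)
        simpa using this
      refine h0.congr fun N => ?_
      ring
  · filter_upwards with N k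
    rw [norm_mul, norm_mul, norm_pow, norm_pow, norm_mul, norm_pow]
    apply mul_le_mul_of_nonneg_right _ (norm_nonneg _)
    apply pow_le_pow_left₀ (by positivity)
    calc ‖q‖ ^ N * ‖x‖ ≤ 1 * ‖x‖ :=
          mul_le_mul_of_nonneg_right (pow_le_one₀ (norm_nonneg q) hq.le) (norm_nonneg x)
      _ = ‖x‖ := one_mul _

lemma mult {q x : ℂ} (hq : ‖q‖ < 1) (hx : ‖x‖ < 1) :
    Multipliable (fun k : ℕ => 1 - x * q ^ k) := by
  have hne : ∀ k : ℕ, (1 : ℂ) - x * q ^ k ≠ 0 := by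
    intro k
    apply one_sub_ne
    rw [norm_mul, norm_pow]
    calc ‖x‖ * ‖q‖ ^ k ≤ ‖x‖ * 1 :=
          mul_le_mul_of_nonneg_left (pow_le_one₀ (norm_nonneg q) hq.le) (norm_nonneg x)
      _ = ‖x‖ := mul_one _
      _ < 1 := hx
  have hlog : Summable (fun k : ℕ => Complex.log (1 - x * q ^ k)) := by
    apply Summable.of_norm_bounded_eventually (g := fun k => (3 / 2) * (‖x‖ * ‖q‖ ^ k))
    · exact ((summable_geometric_of_lt_one (norm_nonneg q) hq).mul_left ‖x‖).mul_left _
    · rw [Nat.cofinite_eq_atTop]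
      have h0 : Tendsto (fun k : ℕ => ‖x‖ * ‖q‖ ^ k) atTop (𝓝 (‖x‖ * 0)) :=
        (tendsto_pow_atTop_nhds_zero_of_lt_one (norm_nonneg q) hq).const_mul ‖x‖
      rw [mul_zero] at h0
      filter_upwards [h0.eventually_le_const (by norm_num : (0:ℝ) < 1/2)] with k hk
      have hz : ‖-(x * q ^ k)‖ ≤ 1 / 2 := by
        rw [norm_neg, norm_mul, norm_pow]; exact hk
      have := Complex.norm_log_one_add_half_le_self hz
      rw [show (1 : ℂ) + -(x * q ^ k) = 1 - x * q ^ k by ring] at this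
      calc ‖Complex.log (1 - x * q ^ k)‖ ≤ 3 / 2 * ‖-(x * q ^ k)‖ := this
        _ = 3 / 2 * (‖x‖ * ‖q‖ ^ k) := by rw [norm_neg, norm_mul, norm_pow]
  exact Complex.multipliable_of_summable_log hlog

end EulerAux

open EulerAux

/-- Euler's identity: `1/(x;q)_∞ = ∑_{n≥0} xⁿ/(q;q)_n` for `|x| < 1`, `|q| < 1`. -/
theorem euler_inv_pochhammer (x q : ℂ) (hx : ‖x‖ < 1) (hq : ‖q‖ < 1) :
    (∏' k : ℕ, (1 - x * q ^ k))⁻¹ =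
      ∑' n : ℕ, x ^ n / ∏ k ∈ Finset.range n, (1 - q ^ (k + 1)) := by
  have hT1 : Tendsto (fun N : ℕ => (∏ k ∈ Finset.range N, (1 - x * q ^ k)) * S q x)
      atTop (𝓝 1) :=
    (tendsto_one hq hx).congr fun N => iter hq hx N
  have hT2 : Tendsto (fun N : ℕ => (∏ k ∈ Finset.range N, (1 - x * q ^ k)) * S q x)
      atTop (𝓝 ((∏' k : ℕ, (1 - x * q ^ k)) * S q x)) :=
    ((mult hq hx).hasProd.tendsto_prod_nat).mul_const _
  have key : (∏' k : ℕ, (1 - x * q ^ k)) * S q x = 1 := tendsto_nhds_unique hT2 hT1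
  rw [inv_eq_of_mul_eq_one_right key]
  exact tsum_congr fun n => (div_eq_mul_inv _ _)
end

section
/- As formal power series, (t^3 q^6; q^6)_∞ / ((t q; q)_∞ (t^2; q^4)_∞) = ∑_{i,j,k ≥ 0} (-1)^k t^{i+2j+3k} q^{i + 3k^2 + 3k} / ((q;q)_i (q^4;q^4)_j (q^6;q^6)_k). -/
open Finset Filter Complex Topology

namespace QAux

/-- Partial q-Pochhammer `(p;p)_n`. -/
noncomputable def Q (p : ℂ) (n : ℕ) : ℂ := ∏ m ∈ Finset.range n, (1 - p ^ (m + 1))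

lemma Q_zero (p : ℂ) : Q p 0 = 1 := by simp [Q]

lemma Q_succ (p : ℂ) (n : ℕ) : Q p (n + 1) = Q p n * (1 - p ^ (n + 1)) := by
  simp [Q, Finset.prod_range_succ]

lemma norm_pow_lt {p : ℂ} (hp : ‖p‖ < 1) {n : ℕ} (hn : n ≠ 0) : ‖p ^ n‖ < 1 := by
  rw [norm_pow]
  exact pow_lt_one₀ (norm_nonneg p) hp hn

lemma one_sub_pow_ne {p : ℂ} (hp : ‖p‖ < 1) (n : ℕ) : 1 - p ^ (n + 1) ≠ 0 := by
  intro h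
  have h1 : p ^ (n + 1) = 1 := by linear_combination -h
  have := norm_pow_lt hp (Nat.succ_ne_zero n)
  rw [h1] at this; simp at this

lemma Q_ne_zero {p : ℂ} (hp : ‖p‖ < 1) (n : ℕ) : Q p n ≠ 0 :=
  Finset.prod_ne_zero_iff.2 fun m _ => one_sub_pow_ne hp m

lemma factor_ne_zero {p x : ℂ} (hp : ‖p‖ < 1) (hx : ‖x‖ < 1) (n : ℕ) :
    1 - x * p ^ n ≠ 0 := by
  intro h
  have h1 : x * p ^ n = 1 := by linear_combination -h
  have h2 : ‖x * p ^ n‖ < 1 := by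
    rw [norm_mul, norm_pow]
    calc ‖x‖ * ‖p‖ ^ n ≤ ‖x‖ * 1 := by
          exact mul_le_mul_of_nonneg_left (pow_le_one₀ (norm_nonneg p) hp.le) (norm_nonneg x)
      _ = ‖x‖ := mul_one _
      _ < 1 := hx
  rw [h1] at h2; simp at h2

lemma summable_log {p x : ℂ} (hp : ‖p‖ < 1) (hx : ‖x‖ < 1) :
    Summable fun n : ℕ => Complex.log (1 - x * p ^ n) := by
  apply Summable.of_norm_bounded_eventually_nat (g := fun n => 3 / 2 * (‖x‖ * ‖p‖ ^ n))
  · exact ((summable_geometric_of_lt_one (norm_nonneg p) hp).mul_left _).mul_left _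
  · have h0 : Tendsto (fun n : ℕ => ‖x‖ * ‖p‖ ^ n) atTop (𝓝 0) := by
      simpa using (tendsto_pow_atTop_nhds_zero_of_lt_one (norm_nonneg p) hp).const_mul ‖x‖
    filter_upwards [h0.eventually_le_const (by norm_num : (0:ℝ) < 1/2)] with n hn
    have hz : ‖-(x * p ^ n)‖ ≤ 1 / 2 := by
      rw [norm_neg, norm_mul, norm_pow]; exact hn
    have := Complex.norm_log_one_add_half_le_self hz
    rw [show (1 : ℂ) + -(x * p ^ n) = 1 - x * p ^ n by ring] at this
    calc ‖Complex.log (1 - x * p ^ n)‖ ≤ 3 / 2 * ‖-(x * p ^ n)‖ := this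
      _ = 3 / 2 * (‖x‖ * ‖p‖ ^ n) := by rw [norm_neg, norm_mul, norm_pow]

lemma multipliable_fac {p x : ℂ} (hp : ‖p‖ < 1) (hx : ‖x‖ < 1) :
    Multipliable fun n : ℕ => 1 - x * p ^ n := by
  exact Complex.multipliable_of_summable_log (summable_log hp hx)

lemma tprod_ne_zero {p x : ℂ} (hp : ‖p‖ < 1) (hx : ‖x‖ < 1) :
    (∏' n : ℕ, (1 - x * p ^ n)) ≠ 0 := by
  have := Complex.cexp_tsum_eq_tprod (f := fun n => 1 - x * p ^ n)
    (fun n => factor_ne_zero hp hx n) (summable_log hp hx)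
  rw [← this]
  exact Complex.exp_ne_zero _


lemma tendsto_Q {p : ℂ} (hp : ‖p‖ < 1) :
    Tendsto (fun n => Q p n) atTop (𝓝 (∏' m : ℕ, (1 - p * p ^ m))) := by
  have h := (multipliable_fac hp hp).hasProd.tendsto_prod_nat
  convert h using 2 with n
  simp only [Q]
  exact Finset.prod_congr rfl fun m _ => by rw [pow_succ']

lemma exists_bound {p : ℂ} (hp : ‖p‖ < 1) :
    ∃ C : ℝ, 0 ≤ C ∧ ∀ n, ‖(Q p n)⁻¹‖ ≤ C := by
  have hP : (∏' m : ℕ, (1 - p * p ^ m)) ≠ 0 := tprod_ne_zero hp hp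
  have h : Tendsto (fun n => ‖(Q p n)⁻¹‖) atTop (𝓝 ‖(∏' m : ℕ, (1 - p * p ^ m))⁻¹‖) :=
    ((tendsto_Q hp).inv₀ hP).norm
  obtain ⟨C, hC⟩ := h.bddAbove_range
  refine ⟨C, le_trans (norm_nonneg _) (hC ⟨0, rfl⟩), fun n => hC ⟨n, rfl⟩⟩

lemma summable_series {p x : ℂ} {C : ℝ} (hp : ‖p‖ < 1) (hC : ∀ n, ‖(Q p n)⁻¹‖ ≤ C)
    (a : ℕ → ℂ) (ha : ∀ n, ‖a n‖ ≤ 1) (hx : ‖x‖ < 1) :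
    Summable fun n : ℕ => a n * x ^ n / Q p n := by
  apply Summable.of_norm_bounded (g := fun n => C * ‖x‖ ^ n)
  · exact (summable_geometric_of_lt_one (norm_nonneg x) hx).mul_left C
  · intro n
    rw [div_eq_mul_inv, norm_mul, norm_mul, norm_pow]
    calc ‖a n‖ * ‖x‖ ^ n * ‖(Q p n)⁻¹‖ ≤ 1 * ‖x‖ ^ n * C := by
          have hC0 : (0:ℝ) ≤ C := le_trans (norm_nonneg _) (hC 0)
          exact mul_le_mul (mul_le_mul_of_nonneg_right (ha n) (by positivity)) (hC n)
            (norm_nonneg _) (by positivity)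
      _ = C * ‖x‖ ^ n := by ring


lemma norm_scaled {p x : ℂ} (hp : ‖p‖ < 1) (hx : ‖x‖ < 1) (N : ℕ) : ‖p ^ N * x‖ < 1 := by
  rw [norm_mul, norm_pow]
  calc ‖p‖ ^ N * ‖x‖ ≤ 1 * ‖x‖ :=
        mul_le_mul_of_nonneg_right (pow_le_one₀ (norm_nonneg p) hp.le) (norm_nonneg x)
    _ = ‖x‖ := one_mul _
    _ < 1 := hx

/-- tail limit: `∑' n, a n * (p^N x)^n / Q p n → a 0` as `N → ∞` (with `a 0 = 1`). -/
lemma tail_tendsto {p x : ℂ} {C : ℝ} (hp : ‖p‖ < 1) (hC : ∀ n, ‖(Q p n)⁻¹‖ ≤ C)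
    (a : ℕ → ℂ) (ha0 : a 0 = 1) (ha : ∀ n, ‖a n‖ ≤ 1) (hx : ‖x‖ < 1) :
    Tendsto (fun N : ℕ => ∑' n : ℕ, a n * (p ^ N * x) ^ n / Q p n) atTop (𝓝 1) := by
  have hC0 : (0:ℝ) ≤ C := le_trans (norm_nonneg _) (hC 0)
  set D : ℝ := ∑' n : ℕ, C * ‖x‖ ^ (n + 1) with hD
  have hgeo : Summable fun n : ℕ => C * ‖x‖ ^ (n + 1) := by
    apply Summable.mul_left
    exact (summable_geometric_of_lt_one (norm_nonneg x) hx).comp_injective (add_left_injective 1)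
  have key : ∀ N : ℕ, ‖(∑' n : ℕ, a n * (p ^ N * x) ^ n / Q p n) - 1‖ ≤ D * ‖p‖ ^ N := by
    intro N
    have hy : ‖p ^ N * x‖ < 1 := norm_scaled hp hx N
    have hs := summable_series hp hC a ha hy
    rw [Summable.tsum_eq_zero_add hs]
    have h0 : a 0 * (p ^ N * x) ^ 0 / Q p 0 = 1 := by simp [ha0, Q_zero]
    rw [h0, add_sub_cancel_left]
    have hsn : Summable fun n : ℕ => ‖a (n+1) * (p ^ N * x) ^ (n+1) / Q p (n+1)‖ :=
      ((hs.comp_injective (add_left_injective 1)).norm)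
    calc ‖∑' n : ℕ, a (n+1) * (p ^ N * x) ^ (n+1) / Q p (n+1)‖
        ≤ ∑' n : ℕ, ‖a (n+1) * (p ^ N * x) ^ (n+1) / Q p (n+1)‖ := norm_tsum_le_tsum_norm hsn
      _ ≤ ∑' n : ℕ, (C * ‖x‖ ^ (n+1)) * ‖p‖ ^ N := by
          apply Summable.tsum_le_tsum _ hsn (hgeo.mul_right _)
          intro n
          rw [div_eq_mul_inv, mul_pow, norm_mul, norm_mul, norm_mul, norm_pow, norm_pow, norm_pow]
          have h1 : ‖p‖ ^ (N * (n+1)) ≤ ‖p‖ ^ N :=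
            pow_le_pow_of_le_one (norm_nonneg p) hp.le (Nat.le_mul_of_pos_right N n.succ_pos)
          calc ‖a (n+1)‖ * ((‖p‖ ^ N) ^ (n+1) * ‖x‖ ^ (n+1)) * ‖(Q p (n+1))⁻¹‖
              ≤ 1 * ((‖p‖ ^ N) ^ (n+1) * ‖x‖ ^ (n+1)) * C := by
                refine mul_le_mul (mul_le_mul_of_nonneg_right (ha _) (by positivity)) (hC _)
                  (norm_nonneg _) (by positivity)
            _ = (‖p‖ ^ (N * (n+1)) * C) * ‖x‖ ^ (n+1) := by rw [← pow_mul]; ring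
            _ ≤ (‖p‖ ^ N * C) * ‖x‖ ^ (n+1) := by
                apply mul_le_mul_of_nonneg_right _ (by positivity)
                exact mul_le_mul_of_nonneg_right h1 hC0
            _ = (C * ‖x‖ ^ (n+1)) * ‖p‖ ^ N := by ring
      _ = D * ‖p‖ ^ N := by rw [hD, tsum_mul_right]
  have hb : Tendsto (fun N : ℕ => D * ‖p‖ ^ N) atTop (𝓝 0) := by
    simpa using (tendsto_pow_atTop_nhds_zero_of_lt_one (norm_nonneg p) hp).const_mul D
  rw [tendsto_iff_norm_sub_tendsto_zero]
  exact squeeze_zero (fun N => norm_nonneg _) key hb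


/-- Triangular exponent. -/
def E (n : ℕ) : ℕ := ∑ m ∈ Finset.range n, m

/-- coefficients for the theta-type series -/
noncomputable def c (p : ℂ) (n : ℕ) : ℂ := (-1) ^ n * p ^ E n

lemma c_zero (p : ℂ) : c p 0 = 1 := by simp [c, E]

lemma c_succ (p : ℂ) (n : ℕ) : c p (n + 1) = -(c p n * p ^ n) := by
  simp only [c, E, Finset.sum_range_succ, pow_succ, pow_add]
  ring

lemma norm_c_le {p : ℂ} (hp : ‖p‖ < 1) (n : ℕ) : ‖c p n‖ ≤ 1 := by
  rw [c, norm_mul, norm_pow, norm_pow, norm_neg, norm_one, one_pow, one_mul]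
  exact pow_le_one₀ (norm_nonneg p) hp.le

lemma norm_py {p y : ℂ} (hp : ‖p‖ < 1) (hy : ‖y‖ < 1) : ‖p * y‖ < 1 := by
  rw [norm_mul]
  calc ‖p‖ * ‖y‖ ≤ 1 * ‖y‖ := mul_le_mul_of_nonneg_right hp.le (norm_nonneg y)
    _ = ‖y‖ := one_mul _
    _ < 1 := hy

/-- Euler step: `F(y)(1-y) = F(py)`. -/
lemma step_F {p y : ℂ} {C : ℝ} (hp : ‖p‖ < 1) (hC : ∀ n, ‖(Q p n)⁻¹‖ ≤ C) (hy : ‖y‖ < 1) :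
    (∑' n : ℕ, y ^ n / Q p n) * (1 - y) = ∑' n : ℕ, (p * y) ^ n / Q p n := by
  have one : ∀ n : ℕ, ‖(1:ℂ)‖ ≤ 1 := fun _ => by norm_num
  have h1 : Summable fun n : ℕ => y ^ n / Q p n := by
    simpa using summable_series hp hC (fun _ => 1) one hy
  have h2 : Summable fun n : ℕ => (p * y) ^ n / Q p n := by
    simpa using summable_series hp hC (fun _ => 1) one (norm_py hp hy)
  have hd : Summable fun n : ℕ => y ^ n / Q p n - (p * y) ^ n / Q p n := h1.sub h2
  have key : (∑' n : ℕ, y ^ n / Q p n) - (∑' n : ℕ, (p * y) ^ n / Q p n)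
      = y * ∑' n : ℕ, y ^ n / Q p n := by
    rw [← Summable.tsum_sub h1 h2, Summable.tsum_eq_zero_add hd]
    have h0 : y ^ 0 / Q p 0 - (p * y) ^ 0 / Q p 0 = 0 := by simp
    rw [h0, zero_add, ← tsum_mul_left]
    apply tsum_congr
    intro n
    have hQ := Q_ne_zero hp n
    have hf := one_sub_pow_ne hp n
    rw [Q_succ]
    field_simp
    ring
  linear_combination key

/-- theta step: `G(y) = (1-y) G(py)`. -/
lemma step_G {p y : ℂ} {C : ℝ} (hp : ‖p‖ < 1) (hC : ∀ n, ‖(Q p n)⁻¹‖ ≤ C) (hy : ‖y‖ < 1) :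
    (∑' n : ℕ, c p n * y ^ n / Q p n)
      = (1 - y) * ∑' n : ℕ, c p n * (p * y) ^ n / Q p n := by
  have h1 : Summable fun n : ℕ => c p n * y ^ n / Q p n :=
    summable_series hp hC _ (norm_c_le hp) hy
  have h2 : Summable fun n : ℕ => c p n * (p * y) ^ n / Q p n :=
    summable_series hp hC _ (norm_c_le hp) (norm_py hp hy)
  have hd : Summable fun n : ℕ => c p n * (p * y) ^ n / Q p n - c p n * y ^ n / Q p n := h2.sub h1
  have key : (∑' n : ℕ, c p n * (p * y) ^ n / Q p n) - (∑' n : ℕ, c p n * y ^ n / Q p n)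
      = y * ∑' n : ℕ, c p n * (p * y) ^ n / Q p n := by
    rw [← Summable.tsum_sub h2 h1, Summable.tsum_eq_zero_add hd]
    have h0 : c p 0 * (p * y) ^ 0 / Q p 0 - c p 0 * y ^ 0 / Q p 0 = 0 := by simp
    rw [h0, zero_add, ← tsum_mul_left]
    apply tsum_congr
    intro n
    have hQ := Q_ne_zero hp n
    have hf := one_sub_pow_ne hp n
    rw [Q_succ, c_succ]
    field_simp
    ring
  linear_combination -key


lemma iter_F {p x : ℂ} {C : ℝ} (hp : ‖p‖ < 1) (hC : ∀ n, ‖(Q p n)⁻¹‖ ≤ C) (hx : ‖x‖ < 1) :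
    ∀ N : ℕ, (∑' n : ℕ, x ^ n / Q p n) * ∏ m ∈ Finset.range N, (1 - x * p ^ m)
      = ∑' n : ℕ, (p ^ N * x) ^ n / Q p n := by
  intro N
  induction N with
  | zero => simp
  | succ N ih =>
      rw [Finset.prod_range_succ, ← mul_assoc, ih]
      have hy : ‖p ^ N * x‖ < 1 := norm_scaled hp hx N
      have := step_F hp hC hy
      rw [show 1 - x * p ^ N = 1 - p ^ N * x by ring, this]
      apply tsum_congr; intro n
      rw [show p * (p ^ N * x) = p ^ (N + 1) * x by ring]

lemma iter_G {p x : ℂ} {C : ℝ} (hp : ‖p‖ < 1) (hC : ∀ n, ‖(Q p n)⁻¹‖ ≤ C) (hx : ‖x‖ < 1) :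
    ∀ N : ℕ, (∑' n : ℕ, c p n * x ^ n / Q p n)
      = (∏ m ∈ Finset.range N, (1 - x * p ^ m)) * ∑' n : ℕ, c p n * (p ^ N * x) ^ n / Q p n := by
  intro N
  induction N with
  | zero => simp
  | succ N ih =>
      rw [Finset.prod_range_succ, ih]
      have hy : ‖p ^ N * x‖ < 1 := norm_scaled hp hx N
      have h := step_G hp hC hy
      rw [show (1 : ℂ) - p ^ N * x = 1 - x * p ^ N by ring] at h
      rw [h, ← mul_assoc]
      congr 1
      apply tsum_congr; intro n
      rw [show p * (p ^ N * x) = p ^ (N + 1) * x by ring]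

/-- Euler's identity: `(∑ x^n/(p;p)_n) ⬝ (x;p)_∞ = 1`. -/
lemma euler_inv {p x : ℂ} (hp : ‖p‖ < 1) (hx : ‖x‖ < 1) :
    (∑' n : ℕ, x ^ n / Q p n) * (∏' n : ℕ, (1 - x * p ^ n)) = 1 := by
  obtain ⟨C, hC0, hC⟩ := exists_bound hp
  have h1 : Tendsto (fun N : ℕ => (∑' n : ℕ, x ^ n / Q p n) * ∏ m ∈ Finset.range N, (1 - x * p ^ m))
      atTop (𝓝 ((∑' n : ℕ, x ^ n / Q p n) * (∏' n : ℕ, (1 - x * p ^ n)))) :=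
    ((multipliable_fac hp hx).hasProd.tendsto_prod_nat).const_mul _
  have h2 : Tendsto (fun N : ℕ => (∑' n : ℕ, x ^ n / Q p n) * ∏ m ∈ Finset.range N, (1 - x * p ^ m))
      atTop (𝓝 1) := by
    have := tail_tendsto hp hC (fun _ => 1) rfl (fun n => by norm_num) hx
    simp only [one_mul] at this
    refine this.congr fun N => ?_
    rw [iter_F hp hC hx N]
  exact tendsto_nhds_unique h1 h2

/-- Euler's theta identity: `∑ (-1)^n p^(n(n-1)/2) x^n/(p;p)_n = (x;p)_∞`. -/
lemma euler_theta {p x : ℂ} (hp : ‖p‖ < 1) (hx : ‖x‖ < 1) :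
    (∑' n : ℕ, c p n * x ^ n / Q p n) = ∏' n : ℕ, (1 - x * p ^ n) := by
  obtain ⟨C, hC0, hC⟩ := exists_bound hp
  have h1 : Tendsto (fun N : ℕ =>
      (∏ m ∈ Finset.range N, (1 - x * p ^ m)) * ∑' n : ℕ, c p n * (p ^ N * x) ^ n / Q p n)
      atTop (𝓝 ((∏' n : ℕ, (1 - x * p ^ n)) * 1)) :=
    ((multipliable_fac hp hx).hasProd.tendsto_prod_nat).mul
      (tail_tendsto hp hC (c p) (c_zero p) (norm_c_le hp) hx)
  rw [mul_one] at h1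
  have h2 : Tendsto (fun N : ℕ =>
      (∏ m ∈ Finset.range N, (1 - x * p ^ m)) * ∑' n : ℕ, c p n * (p ^ N * x) ^ n / Q p n)
      atTop (𝓝 (∑' n : ℕ, c p n * x ^ n / Q p n)) := by
    simp only [← iter_G hp hC hx]
    exact tendsto_const_nhds
  exact tendsto_nhds_unique h2 h1


lemma E_exp (k : ℕ) : 6 * E k + 6 * k = 3 * k ^ 2 + 3 * k := by
  induction k with
  | zero => simp [E]
  | succ k ih =>
      simp only [E, Finset.sum_range_succ] at ih ⊢
      nlinarith [ih]

lemma term_eq (q t : ℂ) (hq : ‖q‖ < 1) (hq4 : ‖q ^ 4‖ < 1) (hq6 : ‖q ^ 6‖ < 1) (i j k : ℕ) :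
    ((t * q) ^ i / Q q i) * ((t ^ 2) ^ j / Q (q ^ 4) j *
      (c (q ^ 6) k * (t ^ 3 * q ^ 6) ^ k / Q (q ^ 6) k))
    = (-1 : ℂ) ^ k * t ^ (i + 2 * j + 3 * k) * q ^ (i + 3 * k ^ 2 + 3 * k) /
      ((∏ r ∈ Finset.range i, (1 - q ^ (r + 1))) *
        (∏ r ∈ Finset.range j, (1 - q ^ (4 * (r + 1)))) *
        (∏ r ∈ Finset.range k, (1 - q ^ (6 * (r + 1))))) := by
  have hB : (∏ r ∈ Finset.range j, (1 - q ^ (4 * (r + 1)))) = Q (q ^ 4) j :=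
    Finset.prod_congr rfl fun r _ => by rw [pow_mul]
  have hC : (∏ r ∈ Finset.range k, (1 - q ^ (6 * (r + 1)))) = Q (q ^ 6) k :=
    Finset.prod_congr rfl fun r _ => by rw [pow_mul]
  have hA : (∏ r ∈ Finset.range i, (1 - q ^ (r + 1))) = Q q i := rfl
  rw [hA, hB, hC]
  have he : i + 3 * k ^ 2 + 3 * k = i + 6 * E k + 6 * k := by
    have := E_exp k; omega
  rw [he, c]
  have h1 := Q_ne_zero hq i
  have h2 := Q_ne_zero hq4 j
  have h3 := Q_ne_zero hq6 k
  rw [pow_add, pow_add, pow_add, pow_add, mul_pow, mul_pow,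
    show (6 : ℕ) * E k = E k * 6 from mul_comm _ _,
    show (6 : ℕ) * k = k * 6 from mul_comm _ _,
    show (2 : ℕ) * j = j * 2 from mul_comm _ _,
    show (3 : ℕ) * k = k * 3 from mul_comm _ _,
    pow_mul, pow_mul, pow_mul, pow_mul]
  field_simp
  ring


end QAux

open QAux Finset
set_option maxHeartbeats 1000000 in

/-- `(t³q⁶;q⁶)_∞ / ((tq;q)_∞ (t²;q⁴)_∞)
  = ∑_{i,j,k≥0} (-1)^k t^{i+2j+3k} q^{i+3k²+3k} / ((q;q)_i (q⁴;q⁴)_j (q⁶;q⁶)_k)`. -/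
theorem triple_product_expansion_two (q t : ℂ) (hq : ‖q‖ < 1) (ht : ‖t‖ < 1) :
    (∏' n : ℕ, (1 - t ^ 3 * q ^ 6 * (q ^ 6) ^ n)) /
      ((∏' n : ℕ, (1 - t * q * q ^ n)) * (∏' n : ℕ, (1 - t ^ 2 * (q ^ 4) ^ n))) =
    ∑' x : ℕ × ℕ × ℕ,
      ((-1 : ℂ)) ^ x.2.2 * t ^ (x.1 + 2 * x.2.1 + 3 * x.2.2) *
          q ^ (x.1 + 3 * x.2.2 ^ 2 + 3 * x.2.2) /
        ((∏ r ∈ Finset.range x.1, (1 - q ^ (r + 1))) *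
          (∏ r ∈ Finset.range x.2.1, (1 - q ^ (4 * (r + 1)))) *
          (∏ r ∈ Finset.range x.2.2, (1 - q ^ (6 * (r + 1))))) := by
  have hq0 := norm_nonneg q
  have ht0 := norm_nonneg t
  have hq4 : ‖q ^ 4‖ < 1 := by
    rw [norm_pow]; exact pow_lt_one₀ hq0 hq (by norm_num)
  have hq6 : ‖q ^ 6‖ < 1 := by
    rw [norm_pow]; exact pow_lt_one₀ hq0 hq (by norm_num)
  have hx1 : ‖t * q‖ < 1 := by
    rw [norm_mul]; nlinarith
  have hx2 : ‖t ^ 2‖ < 1 := by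
    rw [norm_pow]; exact pow_lt_one₀ ht0 ht (by norm_num)
  have hx3 : ‖t ^ 3 * q ^ 6‖ < 1 := by
    rw [norm_mul, norm_pow, norm_pow]
    calc ‖t‖ ^ 3 * ‖q‖ ^ 6 ≤ ‖t‖ ^ 3 * 1 :=
          mul_le_mul_of_nonneg_left (pow_le_one₀ hq0 hq.le) (by positivity)
      _ = ‖t‖ ^ 3 := mul_one _
      _ < 1 := pow_lt_one₀ ht0 ht (by norm_num)
  -- the three series
  set f : ℕ → ℂ := fun i => (t * q) ^ i / Q q i with hf
  set g : ℕ → ℂ := fun j => (t ^ 2) ^ j / Q (q ^ 4) j with hg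
  set h : ℕ → ℂ := fun k => c (q ^ 6) k * (t ^ 3 * q ^ 6) ^ k / Q (q ^ 6) k with hh
  -- identities for the three infinite products
  have e1 : (∑' i, f i) * (∏' n : ℕ, (1 - t * q * q ^ n)) = 1 := euler_inv hq hx1
  have e2 : (∑' j, g j) * (∏' n : ℕ, (1 - t ^ 2 * (q ^ 4) ^ n)) = 1 := euler_inv hq4 hx2
  have e3 : (∑' k, h k) = ∏' n : ℕ, (1 - t ^ 3 * q ^ 6 * (q ^ 6) ^ n) := euler_theta hq6 hx3
  -- summability
  obtain ⟨C1, hC10, hC1⟩ := exists_bound hq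
  obtain ⟨C4, hC40, hC4⟩ := exists_bound hq4
  obtain ⟨C6, hC60, hC6⟩ := exists_bound hq6
  have one1 : ∀ n : ℕ, ‖(1:ℂ)‖ ≤ 1 := fun _ => by norm_num
  have sf : Summable f := by simpa [hf] using summable_series hq hC1 (fun _ => 1) one1 hx1
  have sg : Summable g := by simpa [hg] using summable_series hq4 hC4 (fun _ => 1) one1 hx2
  have sh : Summable h := summable_series hq6 hC6 _ (norm_c_le hq6) hx3
  have snf : Summable fun i => ‖f i‖ := sf.norm
  have sng : Summable fun j => ‖g j‖ := sg.norm
  have snh : Summable fun k => ‖h k‖ := sh.norm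
  have sgh : Summable fun z : ℕ × ℕ => g z.1 * h z.2 := summable_mul_of_summable_norm sng snh
  have sfgh : Summable fun x : ℕ × ℕ × ℕ => f x.1 * (g x.2.1 * h x.2.2) := by
    have := summable_mul_of_summable_norm (f := f) (g := fun z : ℕ × ℕ => g z.1 * h z.2)
      snf (sng.mul_norm snh)
    exact this
  -- product of three sums as triple sum
  have tprod3 : (∑' i, f i) * ((∑' j, g j) * (∑' k, h k))
      = ∑' x : ℕ × ℕ × ℕ, f x.1 * (g x.2.1 * h x.2.2) := by
    rw [Summable.tsum_mul_tsum sg sh sgh]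
    exact Summable.tsum_mul_tsum sf sgh sfgh
  have hP1 : (∏' n : ℕ, (1 - t * q * q ^ n)) ≠ 0 := right_ne_zero_of_mul_eq_one e1
  have hP2 : (∏' n : ℕ, (1 - t ^ 2 * (q ^ 4) ^ n)) ≠ 0 := right_ne_zero_of_mul_eq_one e2
  have hS1 : (∑' i, f i) = (∏' n : ℕ, (1 - t * q * q ^ n))⁻¹ := eq_inv_of_mul_eq_one_left e1
  have hS2 : (∑' j, g j) = (∏' n : ℕ, (1 - t ^ 2 * (q ^ 4) ^ n))⁻¹ := eq_inv_of_mul_eq_one_left e2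
  rw [div_eq_mul_inv, mul_inv, ← e3, ← hS1, ← hS2,
    show (∑' k, h k) * ((∑' i, f i) * (∑' j, g j))
      = (∑' i, f i) * ((∑' j, g j) * (∑' k, h k)) from by ring, tprod3]
  apply tsum_congr
  rintro ⟨i, j, k⟩
  exact term_eq q t hq hq4 hq6 i j k
end

section
/- The generating function for partitions where 0 is allowed as a part, with t tracking the number of parts and a tracking the number of distinct nonzero even values that appear an even number of times, equals ∏_{n≥1} (1 + t q^{2n} + (a-1) t^2 q^{4n}) / ((1 - t q^{2n-1})(1 - t^2 q^{4n})) · 1/(1-t). -/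
open Finset MvPolynomial

/-- The number of distinct positive even values appearing a positive even number of times
in the multiset (partition) `μ`. -/
def evenEvenCount (μ : Multiset ℕ) : ℕ :=
  (μ.toFinset.filter fun v => 0 < v ∧ Even v ∧ Even (μ.count v)).card

namespace GFPZ

abbrev R3 := MvPolynomial (Fin 3) ℤ

/-- monomial attached to a partition -/
noncomputable def mon (μ : Multiset ℕ) : R3 :=
  (X 0 : R3) ^ evenEvenCount μ * X 1 ^ (Multiset.card μ) * X 2 ^ μ.sum

/-- truncated factor for even part `2*(k+1)` -/
noncomputable def ASum (M k : ℕ) : R3 :=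
  ∑ c ∈ Finset.range (2 * M),
    (X 0 : R3) ^ (if Even c ∧ 0 < c then 1 else 0) * X 1 ^ c * X 2 ^ (2 * (k + 1) * c)

/-- truncated factor for odd part `2*k+1` -/
noncomputable def OSum (M k : ℕ) : R3 :=
  ∑ s ∈ Finset.range M, ((X 1 : R3) * X 2 ^ (2 * k + 1)) ^ s

noncomputable def ZSum (M : ℕ) : R3 := ∑ s ∈ Finset.range M, (X 1 : R3) ^ s

/-- the finite set of multisets produced from the truncated product -/
def FSet (M : ℕ) : ℕ → Finset (Multiset ℕ)
  | 0 => (Finset.range M).image fun z => Multiset.replicate z 0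
  | N + 1 => (((FSet M N) ×ˢ Finset.range M) ×ˢ Finset.range (2 * M)).image
      fun p => p.1.1 + Multiset.replicate p.1.2 (2 * N + 1) + Multiset.replicate p.2 (2 * N + 2)

lemma mem_FSet_le {M N : ℕ} {μ : Multiset ℕ} (h : μ ∈ FSet M N) : ∀ v ∈ μ, v ≤ 2 * N := by
  induction N generalizing μ with
  | zero =>
    simp only [FSet, Finset.mem_image, Finset.mem_range] at h
    obtain ⟨z, _, rfl⟩ := h
    intro v hv
    simpa using (Multiset.eq_of_mem_replicate hv).le
  | succ N ih =>
    simp only [FSet, Finset.mem_image, Finset.mem_product] at h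
    obtain ⟨⟨⟨μ', s⟩, c⟩, ⟨⟨hμ', _⟩, _⟩, rfl⟩ := h
    intro v hv
    simp only [Multiset.mem_add] at hv
    rcases hv with (hv | hv) | hv
    · exact (ih hμ' v hv).trans (by omega)
    · rw [Multiset.eq_of_mem_replicate hv]; omega
    · rw [Multiset.eq_of_mem_replicate hv]; omega

lemma eec_add_replicate (μ : Multiset ℕ) (v c : ℕ) (hv : v ∉ μ) :
    evenEvenCount (μ + Multiset.replicate c v)
      = evenEvenCount μ + (if 0 < v ∧ Even v ∧ Even c ∧ 0 < c then 1 else 0) := by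
  classical
  rcases Nat.eq_zero_or_pos c with rfl | hc
  · simp [evenEvenCount]
  have hcv : (μ + Multiset.replicate c v).count v = c := by
    rw [Multiset.count_add, Multiset.count_eq_zero_of_notMem hv,
      Multiset.count_replicate, if_pos rfl, zero_add]
  have hvm : v ∉ μ.toFinset := by simpa using hv
  have hts : (μ + Multiset.replicate c v).toFinset = insert v μ.toFinset := by
    rw [Multiset.toFinset_add, Multiset.toFinset_replicate, if_neg hc.ne',
      Finset.union_comm, ← Finset.insert_eq]
  unfold evenEvenCount
  rw [hts, Finset.filter_insert]
  have hfil : (μ.toFinset.filter fun u =>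
        0 < u ∧ Even u ∧ Even ((μ + Multiset.replicate c v).count u))
      = μ.toFinset.filter fun u => 0 < u ∧ Even u ∧ Even (μ.count u) := by
    apply Finset.filter_congr
    intro u hu
    have hne : v ≠ u := fun h => hvm (h ▸ hu)
    rw [Multiset.count_add, Multiset.count_replicate, if_neg hne, add_zero]
  by_cases hp : 0 < v ∧ Even v ∧ Even c
  · rw [if_pos ⟨hp.1, hp.2.1, by rw [hcv]; exact hp.2.2⟩, hfil,
      Finset.card_insert_of_notMem (fun hmem => hvm (Finset.mem_filter.mp hmem).1),
      if_pos ⟨hp.1, hp.2.1, hp.2.2, hc⟩]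
  · rw [if_neg (fun h => hp ⟨h.1, h.2.1, by rw [← hcv]; exact h.2.2⟩), hfil,
      if_neg (fun h => hp ⟨h.1, h.2.1, h.2.2.1⟩), add_zero]

lemma mon_add_reps {N : ℕ} (μ : Multiset ℕ) (hμ : ∀ v ∈ μ, v ≤ 2 * N) (s c : ℕ) :
    mon (μ + Multiset.replicate s (2 * N + 1) + Multiset.replicate c (2 * N + 2))
      = mon μ * ((X 0 : R3) ^ (if Even c ∧ 0 < c then 1 else 0) * X 1 ^ c
          * X 2 ^ (2 * (N + 1) * c)) * ((X 1 : R3) * X 2 ^ (2 * N + 1)) ^ s := by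
  have h1 : (2 * N + 1) ∉ μ := fun h => by have := hμ _ h; omega
  have h2 : (2 * N + 2) ∉ μ + Multiset.replicate s (2 * N + 1) := by
    intro h
    rcases Multiset.mem_add.mp h with h | h
    · have := hμ _ h; omega
    · have := Multiset.eq_of_mem_replicate h; omega
  have ho : ¬ (0 < 2 * N + 1 ∧ Even (2 * N + 1) ∧ Even s ∧ 0 < s) := by
    rintro ⟨-, h, -⟩; rw [Nat.even_iff] at h; omega
  have he : Even (2 * N + 2) := ⟨N + 1, by ring⟩
  unfold mon
  rw [eec_add_replicate _ _ _ h2, eec_add_replicate _ _ _ h1, if_neg ho]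
  have hif : (if 0 < 2 * N + 2 ∧ Even (2 * N + 2) ∧ Even c ∧ 0 < c then 1 else 0)
      = (if Even c ∧ 0 < c then 1 else 0) := by
    by_cases h : Even c ∧ 0 < c
    · rw [if_pos ⟨by omega, he, h.1, h.2⟩, if_pos h]
    · rw [if_neg (fun hh => h ⟨hh.2.2.1, hh.2.2.2⟩), if_neg h]
  rw [hif]
  simp only [Multiset.card_add, Multiset.card_replicate, Multiset.sum_add,
    Multiset.sum_replicate, smul_eq_mul, add_zero]
  set i := (if Even c ∧ 0 < c then 1 else 0) with hi
  ring

lemma main_sum (M N : ℕ) :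
    (∏ k ∈ Finset.range N, (ASum M k * OSum M k)) * ZSum M = ∑ μ ∈ FSet M N, mon μ := by
  classical
  induction N with
  | zero =>
    rw [Finset.prod_range_zero, one_mul, FSet,
      Finset.sum_image (fun x _ y _ h => by simpa using congrArg Multiset.card h)]
    unfold ZSum
    apply Finset.sum_congr rfl
    intro z _
    have h1 : evenEvenCount (Multiset.replicate z 0) = 0 := by
      unfold evenEvenCount
      rw [Multiset.toFinset_replicate]
      split <;> simp [Finset.filter_singleton]
    simp [mon, h1]
  | succ N ih =>
    have hstep : (∏ k ∈ Finset.range (N + 1), (ASum M k * OSum M k)) * ZSum M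
        = ((∏ k ∈ Finset.range N, (ASum M k * OSum M k)) * ZSum M)
            * (ASum M N * OSum M N) := by
      rw [Finset.prod_range_succ]; ring
    have hinj : Set.InjOn
        (fun p : (Multiset ℕ × ℕ) × ℕ =>
          p.1.1 + Multiset.replicate p.1.2 (2 * N + 1) + Multiset.replicate p.2 (2 * N + 2))
        ↑(((FSet M N) ×ˢ Finset.range M) ×ˢ Finset.range (2 * M)) := by
      rintro ⟨⟨μ1, s1⟩, c1⟩ hp ⟨⟨μ2, s2⟩, c2⟩ hq h
      simp only [Finset.coe_product, Set.mem_prod, Finset.mem_coe, Finset.mem_range] at hp hq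
      obtain ⟨⟨hμ1, -⟩, -⟩ := hp
      obtain ⟨⟨hμ2, -⟩, -⟩ := hq
      simp only at h
      have key : ∀ (μ : Multiset ℕ), μ ∈ FSet M N → ∀ w : ℕ, 2 * N < w →
          ∀ s c : ℕ, (μ + Multiset.replicate s (2 * N + 1)
            + Multiset.replicate c (2 * N + 2)).count w
          = (if 2 * N + 1 = w then s else 0) + (if 2 * N + 2 = w then c else 0) := by
        intro μ hμ w hw s c
        rw [Multiset.count_add, Multiset.count_add, Multiset.count_replicate,
          Multiset.count_replicate,
          Multiset.count_eq_zero_of_notMem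
            (fun hm => absurd (mem_FSet_le hμ _ hm) (by omega)), zero_add]
      have e1 := congrArg (Multiset.count (2 * N + 1)) h
      have e2 := congrArg (Multiset.count (2 * N + 2)) h
      rw [key _ hμ1 _ (by omega), key _ hμ2 _ (by omega)] at e1 e2
      have hs : s1 = s2 := by split_ifs at e1 <;> omega
      have hc : c1 = c2 := by split_ifs at e2 <;> omega
      subst hs; subst hc
      have hμeq : μ1 = μ2 := by
        have := h
        rwa [add_left_inj, add_left_inj] at this
      simp [hμeq]
    rw [hstep, ih, FSet, Finset.sum_image hinj, Finset.sum_product, Finset.sum_product,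
      Finset.sum_mul]
    apply Finset.sum_congr rfl
    intro μ hμ
    unfold ASum OSum
    rw [Finset.sum_mul_sum]
    simp only [Finset.mul_sum]
    rw [Finset.sum_comm]
    apply Finset.sum_congr rfl
    intro s _
    apply Finset.sum_congr rfl
    intro c _
    rw [mon_add_reps μ (mem_FSet_le hμ) s c]
    ring

lemma factor_eq (M k : ℕ) (hM : 0 < M) :
    (1 + X 1 * (X 2) ^ (2 * (k + 1)) + (X 0 - 1) * (X 1) ^ 2 * (X 2) ^ (4 * (k + 1))) *
      (∑ s ∈ Finset.range M, ((X 1 : R3) ^ 2 * (X 2) ^ (4 * (k + 1))) ^ s)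
    = ASum M k + X 1 ^ (2 * M) * ((X 0 - 1) * X 2 ^ (2 * (k + 1) * (2 * M))) := by
  induction M, hM using Nat.le_induction with
  | base =>
    unfold ASum
    rw [Finset.sum_range_one]
    norm_num [Finset.sum_range_succ, Finset.sum_range_one]
    ring
  | succ M hM ih =>
    have h2M : 2 * (M + 1) = 2 * M + 1 + 1 := by ring
    unfold ASum at ih ⊢
    rw [Finset.sum_range_succ, mul_add, ih, h2M, Finset.sum_range_succ,
      Finset.sum_range_succ]
    rw [if_pos ⟨⟨M, by ring⟩, by omega⟩,
      if_neg (by rintro ⟨h, -⟩; rw [Nat.even_iff] at h; omega)]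
    ring

lemma prod_add_err {ι : Type} (s : Finset ι) (f g h : ι → R3) (x : R3)
    (hfg : ∀ i ∈ s, f i = g i + x * h i) :
    ∃ J, ∏ i ∈ s, f i = ∏ i ∈ s, g i + x * J := by
  classical
  induction s using Finset.cons_induction with
  | empty => exact ⟨0, by simp⟩
  | cons a s ha ih =>
    obtain ⟨J, hJ⟩ := ih fun i hi => hfg i (Finset.mem_cons_of_mem hi)
    refine ⟨h a * (∏ i ∈ s, g i + x * J) + g a * J, ?_⟩
    rw [Finset.prod_cons, Finset.prod_cons, hfg a (Finset.mem_cons_self a s), hJ]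
    ring

lemma mem_FSet (M N : ℕ) (μ : Multiset ℕ) (h1 : ∀ v ∈ μ, v ≤ 2 * N)
    (h2 : ∀ v, μ.count v < M) : μ ∈ FSet M N := by
  classical
  induction N generalizing μ with
  | zero =>
    rw [FSet]
    have hall : ∀ b ∈ μ, b = 0 := fun b hb => Nat.le_zero.mp (by simpa using h1 b hb)
    refine Finset.mem_image.mpr ⟨Multiset.card μ, Finset.mem_range.mpr ?_,
      (Multiset.eq_replicate_card.mpr hall).symm⟩
    calc Multiset.card μ = μ.count 0 :=
          (Multiset.count_eq_card.mpr fun b hb => (hall b hb).symm).symm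
      _ < M := h2 0
  | succ N ih =>
    rw [FSet]
    refine Finset.mem_image.mpr
      ⟨((μ.filter (fun v => v ≤ 2 * N), μ.count (2 * N + 1)), μ.count (2 * N + 2)), ?_, ?_⟩
    · refine Finset.mem_product.mpr ⟨Finset.mem_product.mpr ⟨ih _ ?_ ?_,
        Finset.mem_range.mpr (h2 _)⟩,
        Finset.mem_range.mpr (lt_of_lt_of_le (h2 _) (by omega))⟩
      · intro v hv
        exact (Multiset.mem_filter.mp
          (show v ∈ Multiset.filter (fun v => v ≤ 2 * N) μ from hv)).2

      · intro v
        exact lt_of_le_of_lt (Multiset.count_le_of_le v (Multiset.filter_le _ μ)) (h2 v)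
    · dsimp only
      ext v
      rw [Multiset.count_add, Multiset.count_add, Multiset.count_replicate,
        Multiset.count_replicate, Multiset.count_filter]
      rcases Nat.lt_or_ge v (2 * N + 1) with hv | hv
      · rw [if_pos (by omega), if_neg (by omega), if_neg (by omega)]
        omega
      rcases Nat.eq_or_lt_of_le hv with hv1 | hv1
      · rw [if_neg (by omega), if_pos (by omega), if_neg (by omega), ← hv1]
        omega
      rcases Nat.eq_or_lt_of_le hv1 with hv2 | hv2
      · rw [if_neg (by omega), if_neg (by omega), if_pos (by omega)]
        have : v = 2 * N + 2 := by omega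
        rw [← this]; omega
      · rw [if_neg (by omega), if_neg (by omega), if_neg (by omega),
          Multiset.count_eq_zero_of_notMem (fun hm => by have := h1 _ hm; omega)]

lemma triple_eq_iff (a b c a' b' c' : ℕ) :
    (Finsupp.single (0 : Fin 3) a + Finsupp.single 1 b + Finsupp.single 2 c)
      = (Finsupp.single (0 : Fin 3) a' + Finsupp.single 1 b' + Finsupp.single 2 c')
    ↔ a = a' ∧ b = b' ∧ c = c' := by
  constructor
  · intro h
    have h0 := DFunLike.congr_fun h 0
    have h1 := DFunLike.congr_fun h 1
    have h2 := DFunLike.congr_fun h 2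
    simp [Finsupp.single_apply] at h0 h1 h2
    exact ⟨h0, h1, h2⟩
  · rintro ⟨rfl, rfl, rfl⟩; rfl

lemma coeff_mon (e l n : ℕ) (μ : Multiset ℕ) :
    MvPolynomial.coeff
        (Finsupp.single 0 e + Finsupp.single 1 l + Finsupp.single 2 n) (mon μ)
      = if evenEvenCount μ = e ∧ Multiset.card μ = l ∧ μ.sum = n then 1 else 0 := by
  classical
  rw [mon, X_pow_eq_monomial, X_pow_eq_monomial, X_pow_eq_monomial, monomial_mul,
    monomial_mul, coeff_monomial, one_mul, one_mul]
  congr 1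
  rw [eq_iff_iff, triple_eq_iff]

end GFPZ

open GFPZ in
/-- Generating function for partitions in which `0` may appear as a part, where `a = X 0`
tracks the number of distinct nonzero even values appearing an even number of times,
`t = X 1` tracks the number of parts, and `q = X 2` tracks the weight:
stated coefficientwise against sufficiently long truncations of the infinite product
`∏_{n≥1} (1 + t q^{2n} + (a-1) t² q^{4n}) / ((1 - t q^{2n-1})(1 - t² q^{4n})) · 1/(1-t)`. -/
theorem genFun_partitions_with_zero (n ℓ e N M : ℕ) (hN : n ≤ 2 * N) (hM : ℓ < M) :
    (Nat.card {μ : Multiset ℕ // μ.sum = n ∧ Multiset.card μ = ℓ ∧ evenEvenCount μ = e} : ℤ) =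
      MvPolynomial.coeff
        (Finsupp.single 0 e + Finsupp.single 1 ℓ + Finsupp.single 2 n)
        ((∏ k ∈ Finset.range N,
            ((1 + X 1 * (X 2) ^ (2 * (k + 1)) +
                (X 0 - 1) * (X 1) ^ 2 * (X 2) ^ (4 * (k + 1))) *
              (∑ s ∈ Finset.range M, (X 1 * (X 2) ^ (2 * k + 1)) ^ s) *
              (∑ s ∈ Finset.range M, ((X 1) ^ 2 * (X 2) ^ (4 * (k + 1))) ^ s))) *
          (∑ s ∈ Finset.range M, (X 1 : MvPolynomial (Fin 3) ℤ) ^ s)) := by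
  classical
  have hM0 : 0 < M := Nat.lt_of_le_of_lt (Nat.zero_le _) hM
  have hfac : ∀ k ∈ Finset.range N,
      (1 + X 1 * (X 2) ^ (2 * (k + 1)) +
          (X 0 - 1) * (X 1) ^ 2 * (X 2) ^ (4 * (k + 1))) *
        (∑ s ∈ Finset.range M, (X 1 * (X 2) ^ (2 * k + 1)) ^ s) *
        (∑ s ∈ Finset.range M, ((X 1 : R3) ^ 2 * (X 2) ^ (4 * (k + 1))) ^ s)
      = ASum M k * OSum M k
        + X 1 ^ (2 * M) * (((X 0 - 1) * X 2 ^ (2 * (k + 1) * (2 * M))) * OSum M k) := by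
    intro k _
    have h := factor_eq M k hM0
    calc (1 + X 1 * (X 2) ^ (2 * (k + 1)) +
          (X 0 - 1) * (X 1) ^ 2 * (X 2) ^ (4 * (k + 1))) *
        (∑ s ∈ Finset.range M, (X 1 * (X 2) ^ (2 * k + 1)) ^ s) *
        (∑ s ∈ Finset.range M, ((X 1 : R3) ^ 2 * (X 2) ^ (4 * (k + 1))) ^ s)
        = ((1 + X 1 * (X 2) ^ (2 * (k + 1)) +
            (X 0 - 1) * (X 1) ^ 2 * (X 2) ^ (4 * (k + 1))) *
          (∑ s ∈ Finset.range M, ((X 1 : R3) ^ 2 * (X 2) ^ (4 * (k + 1))) ^ s))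
            * OSum M k := by unfold OSum; ring
      _ = (ASum M k + X 1 ^ (2 * M)
            * ((X 0 - 1) * X 2 ^ (2 * (k + 1) * (2 * M)))) * OSum M k := by rw [h]
      _ = _ := by ring
  obtain ⟨J, hJ⟩ := prod_add_err (Finset.range N) _
    (fun k => ASum M k * OSum M k)
    (fun k => ((X 0 - 1) * X 2 ^ (2 * (k + 1) * (2 * M))) * OSum M k)
    (X 1 ^ (2 * M)) hfac
  have hz : (∑ s ∈ Finset.range M, (X 1 : MvPolynomial (Fin 3) ℤ) ^ s) = ZSum M := rfl
  rw [hJ, hz, add_mul, main_sum M N, MvPolynomial.coeff_add]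
  have herr : MvPolynomial.coeff
      (Finsupp.single 0 e + Finsupp.single 1 ℓ + Finsupp.single 2 n)
      (X 1 ^ (2 * M) * J * ZSum M) = 0 := by
    rw [mul_assoc, X_pow_eq_monomial, coeff_monomial_mul']
    rw [if_neg]
    intro hle
    rw [Finsupp.single_le_iff] at hle
    simp [Finsupp.add_apply, Finsupp.single_apply, Fin.ext_iff] at hle
    omega
  rw [herr, add_zero, MvPolynomial.coeff_sum]
  have hco : ∀ μ ∈ FSet M N,
      MvPolynomial.coeff (Finsupp.single 0 e + Finsupp.single 1 ℓ + Finsupp.single 2 n) (mon μ)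
      = if evenEvenCount μ = e ∧ Multiset.card μ = ℓ ∧ μ.sum = n then (1 : ℤ) else 0 :=
    fun μ _ => coeff_mon e ℓ n μ
  rw [Finset.sum_congr rfl hco, Finset.sum_boole]
  have hset : ∀ μ : Multiset ℕ,
      (μ.sum = n ∧ Multiset.card μ = ℓ ∧ evenEvenCount μ = e) ↔
      μ ∈ (FSet M N).filter
        (fun μ => evenEvenCount μ = e ∧ Multiset.card μ = ℓ ∧ μ.sum = n) := by
    intro μ
    constructor
    · rintro ⟨hs, hc, he⟩
      refine Finset.mem_filter.mpr ⟨mem_FSet M N μ ?_ ?_, he, hc, hs⟩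
      · intro v hv
        have : v ≤ μ.sum := Multiset.single_le_sum (fun x _ => Nat.zero_le x) v hv
        omega
      · intro v
        calc μ.count v ≤ Multiset.card μ := Multiset.count_le_card v μ
          _ < M := by omega
    · intro h
      have := Finset.mem_filter.mp h
      tauto
  have hcard : Nat.card {μ : Multiset ℕ // μ.sum = n ∧ Multiset.card μ = ℓ
      ∧ evenEvenCount μ = e}
      = ((FSet M N).filter
          (fun μ => evenEvenCount μ = e ∧ Multiset.card μ = ℓ ∧ μ.sum = n)).card := by
    rw [← Nat.card_eq_finsetCard]
    exact Nat.card_congr (Equiv.subtypeEquivRight hset)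
  rw [hcard]
end

section
/- The generating function for partitions where 0 may appear as a part but only an even number of times, with t tracking the number of parts and a tracking the number of distinct nonzero even values appearing an even number of times, equals ∏_{n≥1} (1 + t q^{2n} + (a-1) t^2 q^{4n}) / ((1 - t q^{2n-1})(1 - t^2 q^{4n})) · 1/(1-t^2). -/
open Finset MvPolynomial

noncomputable section
namespace GFAux
abbrev P3 : Type := MvPolynomial (Fin 3) ℤ

def dd (e l n : ℕ) : Fin 3 →₀ ℕ :=
  Finsupp.single 0 e + Finsupp.single 1 l + Finsupp.single 2 n

@[simp] lemma dd_apply0 (e l n : ℕ) : dd e l n 0 = e := by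
  simp [dd, Finsupp.single_apply]
@[simp] lemma dd_apply1 (e l n : ℕ) : dd e l n 1 = l := by
  simp [dd, Finsupp.single_apply]
@[simp] lemma dd_apply2 (e l n : ℕ) : dd e l n 2 = n := by
  simp [dd, Finsupp.single_apply]

lemma dd_le_iff {e l n e' l' n' : ℕ} :
    dd e l n ≤ dd e' l' n' ↔ e ≤ e' ∧ l ≤ l' ∧ n ≤ n' := by
  constructor
  · intro h
    exact ⟨by simpa using h 0, by simpa using h 1, by simpa using h 2⟩
  · rintro ⟨h1, h2, h3⟩ i
    fin_cases i <;> simpa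

lemma dd_sub {e l n e' l' n' : ℕ} :
    dd e' l' n' - dd e l n = dd (e' - e) (l' - l) (n' - n) := by
  ext i
  fin_cases i <;> simp [Finsupp.tsub_apply]

lemma dd_eq_iff {e l n e' l' n' : ℕ} :
    dd e l n = dd e' l' n' ↔ e = e' ∧ l = l' ∧ n = n' := by
  constructor
  · intro h
    refine ⟨?_, ?_, ?_⟩
    · rw [← dd_apply0 e l n, h, dd_apply0]
    · rw [← dd_apply1 e l n, h, dd_apply1]
    · rw [← dd_apply2 e l n, h, dd_apply2]
  · rintro ⟨rfl, rfl, rfl⟩; rfl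

def term (v m : ℕ) : P3 :=
  monomial (dd (if Even v ∧ Even m ∧ 0 < m then 1 else 0) m (v * m)) 1

def DD (r v : ℕ) : P3 := ∑ m ∈ range r, term v m

def ZZ (M : ℕ) : P3 := ∑ s ∈ range M, monomial (dd 0 (2 * s) 0) 1

lemma X_pow_mul_eq (a b c : ℕ) :
    (X 0 : P3) ^ a * X 1 ^ b * X 2 ^ c = monomial (dd a b c) 1 := by
  simp [dd, X_pow_eq_monomial, monomial_mul]

lemma ZZ_eq (M : ℕ) : ZZ M = ∑ s ∈ range M, (X 1 : P3) ^ (2 * s) := by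
  refine Finset.sum_congr rfl fun s _ => ?_
  rw [← X_pow_mul_eq 0 (2 * s) 0, pow_zero, pow_zero, one_mul, mul_one]

lemma term_odd (k m : ℕ) : term (2 * k + 1) m = monomial (dd 0 m ((2 * k + 1) * m)) 1 := by
  rw [term, if_neg]
  rintro ⟨⟨c, hc⟩, -⟩
  omega

lemma DD_odd_eq (M k : ℕ) :
    DD M (2 * k + 1) = ∑ s ∈ range M, ((X 1 : P3) * X 2 ^ (2 * k + 1)) ^ s := by
  refine Finset.sum_congr rfl fun s _ => ?_
  rw [term_odd, ← X_pow_mul_eq 0 s ((2 * k + 1) * s), pow_zero, one_mul, mul_pow, ← pow_mul,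
    mul_comm (2 * k + 1) s, pow_mul, ← pow_mul]

lemma term_even_even (v s : ℕ) (hv : Even v) (hs : 0 < s) :
    term v (2 * s) = X 0 * X 1 ^ (2 * s) * X 2 ^ (v * (2 * s)) := by
  rw [term, if_pos ⟨hv, even_two_mul s, by omega⟩, ← X_pow_mul_eq, pow_one]

lemma term_even_odd (v s : ℕ) : term v (2 * s + 1) = X 1 ^ (2 * s + 1) * X 2 ^ (v * (2 * s + 1)) := by
  rw [term, if_neg, ← X_pow_mul_eq, pow_zero, one_mul]
  rintro ⟨-, ⟨c, hc⟩, -⟩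
  omega

lemma term_zero (v : ℕ) : term v 0 = 1 := by
  simp [term, dd, monomial_zero']

lemma even_fact (v M : ℕ) (hv : Even v) (hM : 1 ≤ M) :
    (1 + X 1 * X 2 ^ v + (X 0 - 1) * X 1 ^ 2 * X 2 ^ (2 * v)) *
        (∑ s ∈ range M, ((X 1 : P3) ^ 2 * X 2 ^ (2 * v)) ^ s) =
      DD (2 * M) v + (X 0 - 1) * (X 1 ^ (2 * M) * X 2 ^ (v * (2 * M))) := by
  induction M, hM using Nat.le_induction with
  | base =>
    rw [Finset.sum_range_one, pow_zero, mul_one]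
    have h2 : DD 2 v = 1 + X 1 * X 2 ^ v := by
      rw [DD, Finset.sum_range_succ, Finset.sum_range_one, term_zero]
      have := term_even_odd v 0
      rw [this]
      ring_nf
    rw [h2]
    ring_nf
  | succ M hM ih =>
    rw [Finset.sum_range_succ, mul_add, ih]
    have hDD : DD (2 * (M + 1)) v = DD (2 * M) v + term v (2 * M) + term v (2 * M + 1) := by
      have : 2 * (M + 1) = (2 * M) + 1 + 1 := by ring
      rw [this, DD, Finset.sum_range_succ, Finset.sum_range_succ, DD]
    rw [hDD, term_even_even v M hv (by omega), term_even_odd v M]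
    ring

def Rel (l : ℕ) (p q : P3) : Prop :=
  ∀ d : Fin 3 →₀ ℕ, d 1 ≤ l → coeff d p = coeff d q

lemma Rel.refl {l : ℕ} (p : P3) : Rel l p p := fun _ _ => rfl

lemma Rel.mul {l : ℕ} {p q r s : P3} (h1 : Rel l p q) (h2 : Rel l r s) :
    Rel l (p * r) (q * s) := by
  intro d hd
  classical
  rw [coeff_mul, coeff_mul]
  refine Finset.sum_congr rfl fun x hx => ?_
  rw [Finset.HasAntidiagonal.mem_antidiagonal] at hx
  have h1' : x.1 1 ≤ l := by
    have : x.1 1 + x.2 1 = d 1 := by rw [← Finsupp.add_apply, hx]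
    omega
  have h2' : x.2 1 ≤ l := by
    have : x.1 1 + x.2 1 = d 1 := by rw [← Finsupp.add_apply, hx]
    omega
  rw [h1 _ h1', h2 _ h2']

lemma rel_add_junk {l : ℕ} (p r : P3) (u : Fin 3 →₀ ℕ) (hu : l < u 1) :
    Rel l (p + r * monomial u 1) p := by
  intro d hd
  rw [coeff_add, coeff_mul_monomial', if_neg, add_zero]
  intro hle
  exact absurd (le_trans (hle 1) hd) (by omega)

lemma le_sum_apply (f : ℕ →₀ ℕ) (x : ℕ) : f x ≤ f.sum fun _ m => m := by
  by_cases hx : x ∈ f.support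
  · exact Finset.single_le_sum (fun _ _ => Nat.zero_le _) hx
  · simp [Finsupp.notMem_support_iff.mp hx]

lemma mul_le_sum_apply (f : ℕ →₀ ℕ) (x : ℕ) : x * f x ≤ f.sum fun v m => v * m := by
  by_cases hx : x ∈ f.support
  · exact Finset.single_le_sum (f := fun v => v * f v) (fun _ _ => Nat.zero_le _) hx
  · simp [Finsupp.notMem_support_iff.mp hx]

lemma sum_erase_add' (f : ℕ →₀ ℕ) (a : ℕ) (h : ℕ → ℕ → ℕ) (h0 : ∀ v, h v 0 = 0)
    (hadd : ∀ v m1 m2, h v (m1 + m2) = h v m1 + h v m2) :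
    f.sum h = h a (f a) + (f.erase a).sum h := by
  conv_lhs => rw [← Finsupp.single_add_erase a f]
  rw [Finsupp.sum_add_index' h0 hadd, Finsupp.sum_single_index (h0 a)]

lemma counting (M : ℕ) (Rf : ℕ → ℕ) (V : Finset ℕ) :
    0 ∉ V → (∀ v ∈ V, M ≤ Rf v) →
    ∀ e l n : ℕ, l < M →
    coeff (dd e l n) ((∏ v ∈ V, DD (Rf v) v) * ZZ M) =
      ((Finset.finsuppAntidiag (insert 0 V) l).filter fun f =>
        (f.sum fun v m => v * m) = n ∧ Even (f 0) ∧
        (V.filter fun v => Even v ∧ Even (f v) ∧ 0 < f v).card = e).card := by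
  classical
  induction V using Finset.induction_on with
  | empty =>
    intro _ _ e l n hl
    rw [Finset.prod_empty, one_mul, ZZ, coeff_sum]
    simp only [coeff_monomial, insert_empty_eq, Finset.filter_empty, Finset.card_empty]
    by_cases h : e = 0 ∧ n = 0 ∧ Even l
    · obtain ⟨he, hn, c, hc⟩ := h
      have hset : ((Finset.finsuppAntidiag {0} l).filter fun f =>
          (f.sum fun v m => v * m) = n ∧ Even (f 0) ∧ 0 = e) = {Finsupp.single 0 l} := by
        ext f
        simp only [Finset.mem_filter, Finset.mem_finsuppAntidiag', Finset.mem_singleton]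
        constructor
        · rintro ⟨⟨hsum, hsupp⟩, -⟩
          rw [Finsupp.support_subset_singleton] at hsupp
          rw [hsupp] at hsum ⊢
          rw [Finsupp.sum_single_index (by simp)] at hsum
          rw [hsum]
        · rintro rfl
          refine ⟨⟨Finsupp.sum_single_index rfl, Finsupp.support_single_subset⟩, ?_, ?_, he.symm⟩
          · rw [Finsupp.sum_single_index (by simp), hn, zero_mul]
          · rw [Finsupp.single_eq_same]; exact ⟨c, hc⟩
      rw [hset, Finset.card_singleton]
      have : ∀ s ∈ range M, (if dd 0 (2 * s) 0 = dd e l n then (1 : ℤ) else 0)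
          = if s = c then 1 else 0 := by
        intro s _
        by_cases hs : s = c
        · rw [if_pos (dd_eq_iff.mpr ⟨he.symm, by omega, hn.symm⟩), if_pos hs]
        · rw [if_neg, if_neg hs]
          rw [dd_eq_iff]
          rintro ⟨-, h2, -⟩
          omega
      rw [Finset.sum_congr rfl this, Finset.sum_ite_eq' (range M) c fun _ => (1 : ℤ),
        if_pos (Finset.mem_range.mpr (by omega))]
      norm_num
    · have h1 : ∀ s ∈ range M, (if dd 0 (2 * s) 0 = dd e l n then (1 : ℤ) else 0) = 0 := by
        intro s _
        rw [if_neg]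
        rw [dd_eq_iff]
        rintro ⟨he, hll, hn⟩
        exact h ⟨he.symm, hn.symm, ⟨s, by omega⟩⟩
      rw [Finset.sum_congr rfl h1, Finset.sum_const, smul_zero]
      have h2 : ((Finset.finsuppAntidiag {0} l).filter fun f =>
          (f.sum fun v m => v * m) = n ∧ Even (f 0) ∧ 0 = e) = ∅ := by
        ext f
        simp only [Finset.mem_filter, Finset.mem_finsuppAntidiag', Finset.notMem_empty,
          iff_false, not_and]
        rintro ⟨hsum, hsupp⟩ hn heven he
        rw [Finsupp.support_subset_singleton] at hsupp
        rw [hsupp, Finsupp.sum_single_index (by simp)] at hsum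
        rw [hsupp, Finsupp.sum_single_index (by simp)] at hn
        rw [hsupp, Finsupp.single_eq_same] at heven
        exact h ⟨he.symm, by omega, hsum ▸ heven⟩
      rw [h2]
      simp
  | @insert a V haV ih =>
    intro h0 hR e l n hl
    have ha0 : a ≠ 0 := by rintro rfl; exact h0 (Finset.mem_insert_self 0 V)
    have h0V : 0 ∉ V := fun h => h0 (Finset.mem_insert_of_mem h)
    have hRa : M ≤ Rf a := hR a (Finset.mem_insert_self a V)
    have hRV : ∀ v ∈ V, M ≤ Rf v := fun v hv => hR v (Finset.mem_insert_of_mem hv)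
    rw [Finset.prod_insert haV, mul_assoc, DD, Finset.sum_mul, coeff_sum]
    have hterm : ∀ m ∈ range (Rf a),
        coeff (dd e l n) (term a m * ((∏ v ∈ V, DD (Rf v) v) * ZZ M)) =
          if (if Even a ∧ Even m ∧ 0 < m then 1 else 0) ≤ e ∧ m ≤ l ∧ a * m ≤ n then
            (((Finset.finsuppAntidiag (insert 0 V) (l - m)).filter fun g =>
              (g.sum fun v m => v * m) = n - a * m ∧ Even (g 0) ∧
              (V.filter fun v => Even v ∧ Even (g v) ∧ 0 < g v).card
                = e - (if Even a ∧ Even m ∧ 0 < m then 1 else 0)).card : ℤ)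
          else 0 := by
      intro m _
      rw [term, coeff_monomial_mul']
      simp only [dd_le_iff, dd_sub, one_mul]
      by_cases hcond : (if Even a ∧ Even m ∧ 0 < m then 1 else 0) ≤ e ∧ m ≤ l ∧ a * m ≤ n
      · rw [if_pos hcond, if_pos hcond, ih h0V hRV _ _ _ (by omega)]
      · rw [if_neg hcond, if_neg hcond]
    rw [Finset.sum_congr rfl hterm]
    have hfib : ∀ f ∈ (Finset.finsuppAntidiag (insert 0 (insert a V)) l).filter
        (fun f => (f.sum fun v m => v * m) = n ∧ Even (f 0) ∧
          ((insert a V).filter fun v => Even v ∧ Even (f v) ∧ 0 < f v).card = e),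
        f a ∈ range (Rf a) := by
      intro f hf
      rw [Finset.mem_filter, Finset.mem_finsuppAntidiag'] at hf
      have := le_sum_apply f a
      rw [hf.1.1] at this
      exact Finset.mem_range.mpr (by omega)
    rw [Finset.card_eq_sum_card_fiberwise hfib, Nat.cast_sum]
    refine Finset.sum_congr rfl fun m _ => ?_
    by_cases hcond : (if Even a ∧ Even m ∧ 0 < m then 1 else 0) ≤ e ∧ m ≤ l ∧ a * m ≤ n
    · rw [if_pos hcond]
      congr 1
      refine Finset.card_nbij' (fun g => g + Finsupp.single a m) (fun f => f.erase a)
        ?_ ?_ ?_ ?_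
      · -- forward membership
        intro g hg
        rw [Finset.mem_coe, Finset.mem_filter, Finset.mem_finsuppAntidiag'] at hg
        obtain ⟨⟨hsuml, hsupp⟩, hsumn, heven, hcard⟩ := hg
        have hga : g a = 0 := by
          by_contra hne
          have : a ∈ g.support := Finsupp.mem_support_iff.mpr hne
          have := hsupp this
          rcases Finset.mem_insert.mp this with h | h
          · exact ha0 h
          · exact haV h
        have hgv : ∀ v, v ≠ a → (g + Finsupp.single a m) v = g v := by
          intro v hv
          rw [Finsupp.add_apply, Finsupp.single_apply, if_neg (fun h => hv h.symm), add_zero]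
        have hfa : (g + Finsupp.single a m) a = m := by
          rw [Finsupp.add_apply, hga, Finsupp.single_eq_same, zero_add]
        rw [Finset.mem_coe, Finset.mem_filter, Finset.mem_filter, Finset.mem_finsuppAntidiag']
        refine ⟨⟨⟨?_, ?_⟩, ?_, ?_, ?_⟩, hfa⟩
        · rw [Finsupp.sum_add_index' (fun _ => rfl) (fun _ _ _ => rfl),
            Finsupp.sum_single_index rfl, hsuml]
          omega
        · refine subset_trans Finsupp.support_add ?_
          refine Finset.union_subset
            (subset_trans hsupp (Finset.insert_subset_insert 0 (Finset.subset_insert a V)))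
            (subset_trans Finsupp.support_single_subset
              (Finset.singleton_subset_iff.mpr
                (Finset.mem_insert_of_mem (Finset.mem_insert_self a V))))
        · rw [Finsupp.sum_add_index' (fun _ => by simp) (fun v m1 m2 => Nat.mul_add v m1 m2),
            Finsupp.sum_single_index (by simp), hsumn]
          omega
        · rwa [hgv 0 (Ne.symm ha0)]
        · rw [Finset.filter_insert]
          have hVcongr : (V.filter fun v => Even v ∧ Even ((g + Finsupp.single a m) v) ∧
              0 < (g + Finsupp.single a m) v) = V.filter fun v => Even v ∧ Even (g v) ∧ 0 < g v := by
            refine Finset.filter_congr fun v hv => ?_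
            rw [hgv v (fun h => haV (h ▸ hv))]
          rw [hVcongr]
          simp only [hfa]
          by_cases hε : Even a ∧ Even m ∧ 0 < m
          · rw [if_pos hε,
              Finset.card_insert_of_notMem (fun h => haV (Finset.mem_of_mem_filter a h)),
              hcard]
            rw [if_pos hε] at hcond ⊢
            omega
          · rw [if_neg hε, hcard, if_neg hε]
            omega
      · -- backward membership
        intro f hf
        rw [Finset.mem_coe, Finset.mem_filter, Finset.mem_filter, Finset.mem_finsuppAntidiag'] at hf
        obtain ⟨⟨⟨hsuml, hsupp⟩, hsumn, heven, hcard⟩, hfa⟩ := hf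
        have herase : ∀ v, v ≠ a → (f.erase a) v = f v := fun v hv => Finsupp.erase_ne hv
        have hsum1 : (f.sum fun _ m => m) = f a + (f.erase a).sum (fun _ m => m) :=
          sum_erase_add' f a (fun _ m => m) (fun _ => rfl) (fun _ _ _ => rfl)
        have hsum2 : (f.sum fun v m => v * m) = a * f a + (f.erase a).sum (fun v m => v * m) :=
          sum_erase_add' f a (fun v m => v * m) (fun v => by simp)
            (fun v m1 m2 => Nat.mul_add v m1 m2)
        show f.erase a ∈ _
        rw [Finset.mem_coe, Finset.mem_filter, Finset.mem_finsuppAntidiag']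
        refine ⟨⟨?_, ?_⟩, ?_, ?_, ?_⟩
        · rw [hsum1, hfa] at hsuml
          omega
        · rw [Finsupp.support_erase]
          intro x hx
          rw [Finset.mem_erase] at hx
          rcases Finset.mem_insert.mp (hsupp hx.2) with h | h
          · exact Finset.mem_insert.mpr (Or.inl h)
          · rcases Finset.mem_insert.mp h with h' | h'
            · exact absurd h' hx.1
            · exact Finset.mem_insert_of_mem h'
        · rw [hsum2, hfa] at hsumn
          omega
        · rwa [herase 0 (Ne.symm ha0)]
        · have hVcongr : (V.filter fun v => Even v ∧ Even ((f.erase a) v) ∧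
              0 < (f.erase a) v) = V.filter fun v => Even v ∧ Even (f v) ∧ 0 < f v := by
            refine Finset.filter_congr fun v hv => ?_
            rw [herase v (fun h => haV (h ▸ hv))]
          rw [hVcongr]
          rw [Finset.filter_insert] at hcard
          simp only [hfa] at hcard
          by_cases hε : Even a ∧ Even m ∧ 0 < m
          · rw [if_pos hε,
              Finset.card_insert_of_notMem (fun h => haV (Finset.mem_of_mem_filter a h))] at hcard
            rw [if_pos hε]
            omega
          · rw [if_neg hε] at hcard
            rw [hcard, if_neg hε]
            omega
      · -- left inverse
        intro g hg
        rw [Finset.mem_coe, Finset.mem_filter, Finset.mem_finsuppAntidiag'] at hg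
        have hga : g a = 0 := by
          by_contra hne
          have : a ∈ g.support := Finsupp.mem_support_iff.mpr hne
          rcases Finset.mem_insert.mp (hg.1.2 this) with h | h
          · exact ha0 h
          · exact haV h
        show (g + Finsupp.single a m).erase a = g
        rw [Finsupp.erase_add, Finsupp.erase_single,
          Finsupp.erase_of_notMem_support (fun h => Finsupp.mem_support_iff.mp h hga), add_zero]
      · -- right inverse
        intro f hf
        rw [Finset.mem_coe, Finset.mem_filter] at hf
        show f.erase a + Finsupp.single a m = f
        rw [← hf.2, Finsupp.erase_add_single]
    · rw [if_neg hcond]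
      have hempty : ((Finset.finsuppAntidiag (insert 0 (insert a V)) l).filter
          (fun f => (f.sum fun v m => v * m) = n ∧ Even (f 0) ∧
            ((insert a V).filter fun v => Even v ∧ Even (f v) ∧ 0 < f v).card = e)).filter
          (fun f => f a = m) = ∅ := by
        ext f
        simp only [Finset.mem_filter, Finset.mem_finsuppAntidiag', Finset.notMem_empty,
          iff_false, not_and]
        rintro ⟨⟨hsuml, hsupp⟩, hsumn, heven, hcard⟩ hfa
        apply hcond
        refine ⟨?_, ?_, ?_⟩
        · by_cases hε : Even a ∧ Even m ∧ 0 < m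
          · rw [if_pos hε]
            have hmem : a ∈ (insert a V).filter fun v => Even v ∧ Even (f v) ∧ 0 < f v := by
              rw [Finset.mem_filter]
              exact ⟨Finset.mem_insert_self a V, hε.1, hfa ▸ hε.2.1, hfa ▸ hε.2.2⟩
            have := Finset.card_pos.mpr ⟨a, hmem⟩
            omega
          · rw [if_neg hε]; omega
        · have := le_sum_apply f a
          omega
        · have := mul_le_sum_apply f a
          rw [hfa] at this
          omega
      rw [hempty]
      simp

def Rfn (M : ℕ) : ℕ → ℕ := fun v => if Even v then 2 * M else M

lemma Icc_two_succ (m : ℕ) :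
    Finset.Icc 1 (2 * (m + 1)) = insert (2 * m + 2) (insert (2 * m + 1) (Finset.Icc 1 (2 * m))) := by
  ext x
  simp only [Finset.mem_Icc, Finset.mem_insert]
  omega

lemma prod_pair (M N : ℕ) :
    (∏ k ∈ range N, (DD M (2 * k + 1) * DD (2 * M) (2 * k + 2))) =
      ∏ v ∈ Finset.Icc 1 (2 * N), DD (Rfn M v) v := by
  induction N with
  | zero => simp
  | succ N ih =>
    rw [Finset.prod_range_succ, ih, Icc_two_succ,
      Finset.prod_insert (by simp only [Finset.mem_insert, Finset.mem_Icc]; omega),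
      Finset.prod_insert (by simp only [Finset.mem_Icc]; omega)]
    have h1 : Rfn M (2 * N + 1) = M := by
      rw [Rfn, if_neg]
      rintro ⟨c, hc⟩; omega
    have h2 : Rfn M (2 * N + 2) = 2 * M := by
      rw [Rfn, if_pos ⟨N + 1, by omega⟩]
    rw [h1, h2]
    ring

lemma factor_rel (M k ℓ : ℕ) (hM : 1 ≤ M) (hl : ℓ < 2 * M) :
    Rel ℓ
      ((1 + X 1 * X 2 ^ (2 * (k + 1)) +
          (X 0 - 1) * X 1 ^ 2 * X 2 ^ (4 * (k + 1))) *
        (∑ s ∈ range M, ((X 1 : P3) * X 2 ^ (2 * k + 1)) ^ s) *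
        (∑ s ∈ range M, ((X 1 : P3) ^ 2 * X 2 ^ (4 * (k + 1))) ^ s))
      (DD M (2 * k + 1) * DD (2 * M) (2 * k + 2)) := by
  have h4 : (4 : ℕ) * (k + 1) = 2 * (2 * (k + 1)) := by ring
  have h2 : 2 * (k + 1) = 2 * k + 2 := by ring
  have hef := even_fact (2 * (k + 1)) M (even_two_mul (k + 1)) hM
  have hmono : (X 1 : P3) ^ (2 * M) * X 2 ^ (2 * (k + 1) * (2 * M)) =
      monomial (dd 0 (2 * M) (2 * (k + 1) * (2 * M))) 1 := by
    rw [← X_pow_mul_eq 0 (2 * M) (2 * (k + 1) * (2 * M)), pow_zero, one_mul]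
  have heq :
      (1 + X 1 * X 2 ^ (2 * (k + 1)) + (X 0 - 1) * X 1 ^ 2 * X 2 ^ (4 * (k + 1))) *
        (∑ s ∈ range M, ((X 1 : P3) * X 2 ^ (2 * k + 1)) ^ s) *
        (∑ s ∈ range M, ((X 1 : P3) ^ 2 * X 2 ^ (4 * (k + 1))) ^ s) =
      DD M (2 * k + 1) * DD (2 * M) (2 * k + 2) +
        ((∑ s ∈ range M, ((X 1 : P3) * X 2 ^ (2 * k + 1)) ^ s) * (X 0 - 1)) *
          monomial (dd 0 (2 * M) (2 * (k + 1) * (2 * M))) 1 := by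
    rw [← hmono, ← DD_odd_eq, ← h2, h4]
    calc (1 + X 1 * X 2 ^ (2 * (k + 1)) +
            (X 0 - 1) * X 1 ^ 2 * X 2 ^ (2 * (2 * (k + 1)))) *
          DD M (2 * k + 1) *
          (∑ s ∈ range M, ((X 1 : P3) ^ 2 * X 2 ^ (2 * (2 * (k + 1)))) ^ s)
        = ((1 + X 1 * X 2 ^ (2 * (k + 1)) +
            (X 0 - 1) * X 1 ^ 2 * X 2 ^ (2 * (2 * (k + 1)))) *
          (∑ s ∈ range M, ((X 1 : P3) ^ 2 * X 2 ^ (2 * (2 * (k + 1)))) ^ s)) *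
          DD M (2 * k + 1) := by ring
      _ = (DD (2 * M) (2 * (k + 1)) +
            (X 0 - 1) * (X 1 ^ (2 * M) * X 2 ^ (2 * (k + 1) * (2 * M)))) *
          DD M (2 * k + 1) := by rw [hef]
      _ = _ := by ring
  rw [heq]
  exact rel_add_junk _ _ _ (by simp [hl])

lemma prod_rel {ℓ : ℕ} (N : ℕ) (f g : ℕ → P3) (h : ∀ k < N, Rel ℓ (f k) (g k)) :
    Rel ℓ (∏ k ∈ range N, f k) (∏ k ∈ range N, g k) := by
  induction N with
  | zero => simpa using Rel.refl 1
  | succ N ih =>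
    rw [Finset.prod_range_succ, Finset.prod_range_succ]
    exact Rel.mul (ih fun k hk => h k (by omega)) (h N (by omega))

lemma sum_toMultiset (f : ℕ →₀ ℕ) : f.toMultiset.sum = f.sum fun v m => v * m := by
  rw [Finsupp.toMultiset_apply, Finsupp.sum, Finsupp.sum]
  rw [← Multiset.coe_sumAddMonoidHom, map_sum]
  refine Finset.sum_congr rfl fun a _ => ?_
  rw [Multiset.coe_sumAddMonoidHom, Multiset.nsmul_singleton, Multiset.sum_replicate,
    smul_eq_mul, mul_comm]

lemma mem_iff (N ℓ n e : ℕ) (hN : n ≤ 2 * N) (μ : Multiset ℕ) :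
    (μ.sum = n ∧ Multiset.card μ = ℓ ∧ Even (μ.count 0) ∧
        (μ.toFinset.filter fun v => 0 < v ∧ Even v ∧ Even (μ.count v)).card = e) ↔
      Multiset.toFinsupp μ ∈ (Finset.finsuppAntidiag (insert 0 (Finset.Icc 1 (2 * N))) ℓ).filter
        (fun f => (f.sum fun v m => v * m) = n ∧ Even (f 0) ∧
          ((Finset.Icc 1 (2 * N)).filter fun v => Even v ∧ Even (f v) ∧ 0 < f v).card = e) := by
  classical
  rw [Finset.mem_filter, Finset.mem_finsuppAntidiag']
  have happ : ∀ v, Multiset.toFinsupp μ v = μ.count v := fun v => Multiset.toFinsupp_apply μ v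
  have hsumw : ((Multiset.toFinsupp μ).sum fun v m => v * m) = μ.sum := by
    rw [← sum_toMultiset, Multiset.toFinsupp_toMultiset]
  have hcardf : ((Multiset.toFinsupp μ).sum fun _ m => m) = Multiset.card μ := by
    have h := Finsupp.card_toMultiset (Multiset.toFinsupp μ)
    rw [Multiset.toFinsupp_toMultiset] at h
    exact h.symm
  have hvle : ∀ v ∈ μ, v ≤ μ.sum := by
    intro v hv
    obtain ⟨μ', rfl⟩ := Multiset.exists_cons_of_mem hv
    rw [Multiset.sum_cons]
    omega
  have hsetEq : μ.sum = n →
      ((Finset.Icc 1 (2 * N)).filter fun v =>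
          Even v ∧ Even (Multiset.toFinsupp μ v) ∧ 0 < Multiset.toFinsupp μ v) =
        μ.toFinset.filter fun v => 0 < v ∧ Even v ∧ Even (μ.count v) := by
    intro hsum
    ext v
    simp only [Finset.mem_filter, Finset.mem_Icc, Multiset.mem_toFinset, happ]
    constructor
    · rintro ⟨⟨h1, _⟩, hev, hec, hpos⟩
      exact ⟨Multiset.count_pos.mp hpos, by omega, hev, hec⟩
    · rintro ⟨hmem, hvpos, hev, hec⟩
      have := hvle v hmem
      exact ⟨⟨by omega, by omega⟩, hev, hec, Multiset.count_pos.mpr hmem⟩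
  constructor
  · rintro ⟨hsum, hcard, heven, hee⟩
    refine ⟨⟨by rw [hcardf, hcard], ?_⟩, by rw [hsumw, hsum], by rw [happ 0]; exact heven, ?_⟩
    · intro v hv
      rw [Multiset.toFinsupp_support, Multiset.mem_toFinset] at hv
      rcases Nat.eq_zero_or_pos v with h | h
      · exact Finset.mem_insert.mpr (Or.inl h)
      · have := hvle v hv
        exact Finset.mem_insert.mpr (Or.inr (Finset.mem_Icc.mpr ⟨h, by omega⟩))
    · rw [hsetEq hsum, hee]
  · rintro ⟨⟨hcard, _⟩, hsum, heven, hee⟩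
    have hsum' : μ.sum = n := by rw [← hsumw]; exact hsum
    exact ⟨hsum', by rw [← hcardf]; exact hcard, by rw [← happ 0]; exact heven,
      by rw [← hsetEq hsum', hee]⟩

end GFAux
end

/-- Generating function for partitions in which `0` may appear as a part but only an even
number of times, where `a = X 0` tracks the number of distinct nonzero even values
appearing an even number of times, `t = X 1` tracks the number of parts, and `q = X 2`
tracks the weight: stated coefficientwise against sufficiently long truncations of
`∏_{n≥1} (1 + t q^{2n} + (a-1) t² q^{4n}) / ((1 - t q^{2n-1})(1 - t² q^{4n})) · 1/(1-t²)`. -/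
theorem genFun_partitions_with_even_zeros (n ℓ e N M : ℕ) (hN : n ≤ 2 * N) (hM : ℓ < M) :
    (Nat.card {μ : Multiset ℕ // μ.sum = n ∧ Multiset.card μ = ℓ ∧
        Even (μ.count 0) ∧ evenEvenCount μ = e} : ℤ) =
      MvPolynomial.coeff
        (Finsupp.single 0 e + Finsupp.single 1 ℓ + Finsupp.single 2 n)
        ((∏ k ∈ Finset.range N,
            ((1 + X 1 * (X 2) ^ (2 * (k + 1)) +
                (X 0 - 1) * (X 1) ^ 2 * (X 2) ^ (4 * (k + 1))) *
              (∑ s ∈ Finset.range M, (X 1 * (X 2) ^ (2 * k + 1)) ^ s) *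
              (∑ s ∈ Finset.range M, ((X 1) ^ 2 * (X 2) ^ (4 * (k + 1))) ^ s))) *
          (∑ s ∈ Finset.range M, (X 1 : MvPolynomial (Fin 3) ℤ) ^ (2 * s))) := by
  classical
  have hM1 : 1 ≤ M := by omega
  rw [show Finsupp.single 0 e + Finsupp.single 1 ℓ + Finsupp.single 2 n
      = GFAux.dd e ℓ n from rfl]
  rw [← GFAux.ZZ_eq M]
  have hrel :
      MvPolynomial.coeff (GFAux.dd e ℓ n)
        ((∏ k ∈ Finset.range N,
            ((1 + X 1 * (X 2) ^ (2 * (k + 1)) +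
                (X 0 - 1) * (X 1) ^ 2 * (X 2) ^ (4 * (k + 1))) *
              (∑ s ∈ Finset.range M, (X 1 * (X 2) ^ (2 * k + 1)) ^ s) *
              (∑ s ∈ Finset.range M, ((X 1) ^ 2 * (X 2) ^ (4 * (k + 1))) ^ s))) *
          GFAux.ZZ M) =
      MvPolynomial.coeff (GFAux.dd e ℓ n)
        ((∏ v ∈ Finset.Icc 1 (2 * N), GFAux.DD (GFAux.Rfn M v) v) * GFAux.ZZ M) := by
    rw [← GFAux.prod_pair M N]
    refine GFAux.Rel.mul
      (GFAux.prod_rel N _ _ fun k _ => GFAux.factor_rel M k ℓ hM1 (by omega))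
      (GFAux.Rel.refl _) (GFAux.dd e ℓ n) (by simp)
  rw [hrel,
    GFAux.counting M (GFAux.Rfn M) (Finset.Icc 1 (2 * N)) (by simp)
      (fun v _ => by unfold GFAux.Rfn; split <;> omega) e ℓ n hM]
  congr 1
  rw [← Nat.card_eq_finsetCard]
  exact Nat.card_congr (Equiv.subtypeEquiv Multiset.toFinsupp.toEquiv
    fun μ => GFAux.mem_iff N ℓ n e hN μ)
end

section
/- Let kr_2(n,m) count partitions of n into m parts with: no two consecutive integers both appearing as parts; odd parts not repeating; for any three consecutive parts λ_i ≤ λ_{i+1} ≤ λ_{i+2} with λ_{i+1} even and appearing more than once, |λ_i − λ_{i+2}| ≥ 4; and 1 not a part. Let kr_3(n,m) count partitions of n into m parts satisfying the same first three conditions but with 1, 2, 3 all forbidden as parts. Then kr_3(n, m) = kr_2(n − 2m, m) for all n, m. -/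
/-- The common conditions (a), (b), (c): writing the parts in nondecreasing order
`λ₁ ≤ λ₂ ≤ ...`: no two consecutive integers both appear as parts; odd parts do not
repeat; and for any contiguous subtriple `λᵢ, λᵢ₊₁, λᵢ₊₂` with `λᵢ₊₁` even and
appearing more than once, `λᵢ₊₂ - λᵢ ≥ 4`. -/
def krBase {n : ℕ} (p : Nat.Partition n) : Prop :=
  (∀ k : ℕ, ¬(k ∈ p.parts ∧ k + 1 ∈ p.parts)) ∧
  (∀ k : ℕ, Odd k → p.parts.count k ≤ 1) ∧
  (∀ i : ℕ, ∀ h : i + 2 < (p.parts.sort (· ≤ ·)).length,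
    (Even ((p.parts.sort (· ≤ ·)).get ⟨i + 1, by omega⟩) ∧
        2 ≤ p.parts.count ((p.parts.sort (· ≤ ·)).get ⟨i + 1, by omega⟩)) →
      (p.parts.sort (· ≤ ·)).get ⟨i, by omega⟩ + 4 ≤ (p.parts.sort (· ≤ ·)).get ⟨i + 2, h⟩)

/-- `kr₂ n m`: partitions of `n` into `m` parts satisfying (a), (b), (c) and not
containing `1` as a part. -/
noncomputable def kr2 (n m : ℕ) : ℕ :=
  Nat.card {p : Nat.Partition n // krBase p ∧ Multiset.card p.parts = m ∧ 1 ∉ p.parts}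

/-- `kr₃ n m`: partitions of `n` into `m` parts satisfying (a), (b), (c) and not
containing `1`, `2` or `3` as parts. -/
noncomputable def kr3 (n m : ℕ) : ℕ :=
  Nat.card {p : Nat.Partition n // krBase p ∧ Multiset.card p.parts = m ∧
    1 ∉ p.parts ∧ 2 ∉ p.parts ∧ 3 ∉ p.parts}

namespace KRaux

lemma sum_map_add2 (t : Multiset ℕ) :
    (t.map (· + 2)).sum = t.sum + 2 * Multiset.card t := by
  have : (t.map (fun i => i + 2)).sum = (t.map (fun i => i)).sum + (t.map (fun _ => 2)).sum :=
    Multiset.sum_map_add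
  simpa [Multiset.map_id', Multiset.map_const, Multiset.sum_replicate, mul_comm] using this

lemma sort_map_add2 (s : Multiset ℕ) :
    (s.map (· + 2)).sort (· ≤ ·) = (s.sort (· ≤ ·)).map (· + 2) := by
  have hperm : ((s.map (· + 2)).sort (· ≤ ·) : Multiset ℕ) =
      (((s.sort (· ≤ ·)).map (· + 2) : List ℕ) : Multiset ℕ) := by
    rw [Multiset.sort_eq, ← Multiset.map_coe, Multiset.sort_eq]
  have h1 : ((s.map (· + 2)).sort (· ≤ ·)).Pairwise (· ≤ ·) := Multiset.pairwise_sort _ _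
  have h2 : (((s.sort (· ≤ ·)).map (· + 2) : List ℕ)).Pairwise (· ≤ ·) :=
    List.Pairwise.map _ (fun h => by omega) (Multiset.pairwise_sort s _)
  exact List.Perm.eq_of_pairwise' h1 h2 (Multiset.coe_eq_coe.mp hperm)

/-- The base conditions as a predicate on the multiset of parts. -/
def KB (s : Multiset ℕ) : Prop :=
  (∀ k : ℕ, ¬(k ∈ s ∧ k + 1 ∈ s)) ∧
  (∀ k : ℕ, Odd k → s.count k ≤ 1) ∧
  (∀ i : ℕ, ∀ h : i + 2 < (s.sort (· ≤ ·)).length,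
    (Even ((s.sort (· ≤ ·)).get ⟨i + 1, by omega⟩) ∧
        2 ≤ s.count ((s.sort (· ≤ ·)).get ⟨i + 1, by omega⟩)) →
      (s.sort (· ≤ ·)).get ⟨i, by omega⟩ + 4 ≤ (s.sort (· ≤ ·)).get ⟨i + 2, h⟩)

lemma krBase_iff {n : ℕ} (p : Nat.Partition n) : krBase p ↔ KB p.parts := Iff.rfl

lemma count_shift (s : Multiset ℕ) (k : ℕ) :
    (s.map (· + 2)).count (k + 2) = s.count k :=
  Multiset.count_map_eq_count' _ s (fun a b h => by omega) k

lemma even_shift (x : ℕ) : Even (x + 2) ↔ Even x := by simp [Nat.even_add]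

lemma KB_shift (s : Multiset ℕ) : KB (s.map (· + 2)) ↔ KB s := by
  have hmem : ∀ k, k + 2 ∈ s.map (· + 2) ↔ k ∈ s := by
    intro k
    simp only [Multiset.mem_map]
    constructor
    · rintro ⟨a, ha, h⟩
      have : a = k := by omega
      subst this; exact ha
    · exact fun h => ⟨k, h, rfl⟩
  have hge2 : ∀ k ∈ s.map (· + 2), 2 ≤ k := by
    intro k hk
    rw [Multiset.mem_map] at hk
    obtain ⟨a, _, rfl⟩ := hk
    omega
  have hsort := sort_map_add2 s
  have hlen : ((s.map (· + 2)).sort (· ≤ ·)).length = ((s.sort (· ≤ ·))).length := by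
    rw [hsort, List.length_map]
  have hget : ∀ j (hj : j < ((s.map (· + 2)).sort (· ≤ ·)).length)
      (hj' : j < (s.sort (· ≤ ·)).length),
      ((s.map (· + 2)).sort (· ≤ ·)).get ⟨j, hj⟩ = (s.sort (· ≤ ·)).get ⟨j, hj'⟩ + 2 := by
    intro j hj hj'
    simp [hsort, List.get_eq_getElem, List.getElem_map]
  constructor
  · rintro ⟨h1, h2, h3⟩
    refine ⟨?_, ?_, ?_⟩
    · rintro k ⟨hk, hk1⟩
      refine h1 (k + 2) ⟨(hmem k).mpr hk, ?_⟩
      have := (hmem (k + 1)).mpr hk1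
      simpa [show (k + 1) + 2 = k + 2 + 1 from by omega] using this
    · intro k hk
      have hodd : Odd (k + 2) := by rcases hk with ⟨t, ht⟩; exact ⟨t + 1, by omega⟩
      have := h2 (k + 2) hodd
      rwa [count_shift] at this
    · intro i h hyp
      have h' : i + 2 < ((s.map (· + 2)).sort (· ≤ ·)).length := by omega
      have := h3 i h'
      rw [hget i (by omega) (by omega), hget (i + 1) (by omega) (by omega),
        hget (i + 2) h' h, count_shift, even_shift] at this
      have := this hyp
      omega
  · rintro ⟨h1, h2, h3⟩
    refine ⟨?_, ?_, ?_⟩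
    · rintro k ⟨hk, hk1⟩
      have hk2 : 2 ≤ k := hge2 k hk
      have e1 : k = (k - 2) + 2 := by omega
      have e2 : k + 1 = (k - 2 + 1) + 2 := by omega
      refine h1 (k - 2) ⟨(hmem (k - 2)).mp (e1 ▸ hk), (hmem (k - 2 + 1)).mp (e2 ▸ hk1)⟩
    · intro k hk
      by_cases hk2 : 2 ≤ k
      · have e1 : k = (k - 2) + 2 := by omega
        rw [e1, count_shift]
        exact h2 (k - 2) (by rcases hk with ⟨t, ht⟩; exact ⟨t - 1, by omega⟩)
      · have : k ∉ s.map (· + 2) := fun h => by have := hge2 k h; omega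
        rw [Multiset.count_eq_zero.mpr this]
        omega
    · intro i h hyp
      have h' : i + 2 < (s.sort (· ≤ ·)).length := by omega
      have := h3 i h'
      rw [hget (i + 1) (hj' := by omega), count_shift, even_shift] at hyp
      rw [hget i (hj' := by omega), hget (i + 2) (hj' := h')]
      have := this hyp
      omega

end KRaux

namespace KRaux

lemma parts_ge4 {n m : ℕ}
    (x : {p : Nat.Partition n // krBase p ∧ Multiset.card p.parts = m ∧
      1 ∉ p.parts ∧ 2 ∉ p.parts ∧ 3 ∉ p.parts}) :
    ∀ i ∈ x.1.parts, 4 ≤ i := by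
  obtain ⟨hb, hc, h1, h2, h3⟩ := x.2
  intro i hi
  have h0 := x.1.parts_pos hi
  by_contra hlt
  push_neg at hlt
  interval_cases i
  · exact h1 hi
  · exact h2 hi
  · exact h3 hi

lemma parts_ge2 {n m : ℕ}
    (y : {p : Nat.Partition n // krBase p ∧ Multiset.card p.parts = m ∧ 1 ∉ p.parts}) :
    ∀ i ∈ y.1.parts, 2 ≤ i := by
  intro i hi
  have h0 := y.1.parts_pos hi
  have h1 := y.2.2.2
  rcases Nat.lt_or_ge i 2 with h | h
  · interval_cases i
    exact absurd hi h1
  · exact h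

end KRaux

/-- `kr₃(n, m) = kr₂(n − 2m, m)` for all `n, m`. -/
theorem kr3_eq_kr2 (n m : ℕ) : kr3 n m = kr2 (n - 2 * m) m := by
  unfold kr3 kr2
  apply Nat.card_congr
  have down_up : ∀ (s : Multiset ℕ), (∀ i ∈ s, 4 ≤ i) →
      (s.map (· - 2)).map (· + 2) = s := by
    intro s hs
    rw [Multiset.map_map]
    calc Multiset.map ((· + 2) ∘ (· - 2)) s = Multiset.map (fun x => x) s :=
          Multiset.map_congr rfl (fun i hi => by have := hs i hi; simp; omega)
      _ = s := Multiset.map_id' s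
  have up_down : ∀ (s : Multiset ℕ), (s.map (· + 2)).map (· - 2) = s := by
    intro s
    rw [Multiset.map_map]
    calc Multiset.map ((· - 2) ∘ (· + 2)) s = Multiset.map (fun x => x) s :=
          Multiset.map_congr rfl (fun i _ => by simp)
      _ = s := Multiset.map_id' s
  refine
    { toFun := fun x => ⟨⟨x.1.parts.map (· - 2), ?_, ?_⟩, ?_, ?_, ?_⟩
      invFun := fun y => ⟨⟨y.1.parts.map (· + 2), ?_, ?_⟩, ?_, ?_, ?_, ?_, ?_⟩
      left_inv := ?_
      right_inv := ?_ }
  -- toFun : parts_pos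
  · intro i hi
    rw [Multiset.mem_map] at hi
    obtain ⟨a, ha, rfl⟩ := hi
    have := KRaux.parts_ge4 x a ha
    omega
  -- toFun : parts_sum
  · have h4 := KRaux.parts_ge4 x
    have hs := KRaux.sum_map_add2 (x.1.parts.map (· - 2))
    rw [down_up _ h4] at hs
    have hn := x.1.parts_sum
    have hcard : Multiset.card (x.1.parts.map (· - 2)) = Multiset.card x.1.parts :=
      Multiset.card_map _ _
    have hm := x.2.2.1
    omega
  -- toFun : krBase
  · refine (KRaux.KB_shift _).mp ?_
    rw [down_up _ (KRaux.parts_ge4 x)]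
    exact x.2.1
  -- toFun : card
  · rw [Multiset.card_map]
    exact x.2.2.1
  -- toFun : 1 ∉
  · intro hmem
    rw [Multiset.mem_map] at hmem
    obtain ⟨a, ha, hea⟩ := hmem
    have := KRaux.parts_ge4 x a ha
    omega
  -- invFun : parts_pos
  · intro i hi
    rw [Multiset.mem_map] at hi
    obtain ⟨a, ha, rfl⟩ := hi
    omega
  -- invFun : parts_sum
  · have hs := KRaux.sum_map_add2 y.1.parts
    have hn := y.1.parts_sum
    have hm := y.2.2.1
    have hle : Multiset.card y.1.parts • 2 ≤ y.1.parts.sum :=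
      Multiset.card_nsmul_le_sum (KRaux.parts_ge2 y)
    rw [smul_eq_mul] at hle
    omega
  -- invFun : krBase
  · exact (KRaux.KB_shift _).mpr y.2.1
  -- invFun : card
  · rw [Multiset.card_map]
    exact y.2.2.1
  -- invFun : 1 ∉
  · intro hmem
    rw [Multiset.mem_map] at hmem
    obtain ⟨a, ha, hea⟩ := hmem
    have := KRaux.parts_ge2 y a ha
    omega
  -- invFun : 2 ∉
  · intro hmem
    rw [Multiset.mem_map] at hmem
    obtain ⟨a, ha, hea⟩ := hmem
    have := KRaux.parts_ge2 y a ha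
    omega
  -- invFun : 3 ∉
  · intro hmem
    rw [Multiset.mem_map] at hmem
    obtain ⟨a, ha, hea⟩ := hmem
    have := KRaux.parts_ge2 y a ha
    omega
  -- left_inv
  · intro x
    apply Subtype.ext
    apply Nat.Partition.ext
    exact down_up _ (KRaux.parts_ge4 x)
  -- right_inv
  · intro y
    apply Subtype.ext
    apply Nat.Partition.ext
    exact up_down _
end

section
/- Define polynomials P_0, P_1 in q with parameters (m_1, m_2, m_3, m+1) by the recursions P_0(m_1,m_2,m_3,m+1) = q^{2m}[P_0(m_1−1,m_2,m_3,m) + P_1(m_1−1,m_2,m_3,m−1) + P_0(m_1−1,m_2,m_3,m−1)] + q^{5m−7}[P_1(m_1,m_2,m_3−1,m−3) + P_0(m_1,m_2,m_3−1,m−3) + P_1(m_1,m_2,m_3−1,m−4)] and P_1(m_1,m_2,m_3,m+1) = q^{2m+1}[P_1(m_1,m_2−1,m_3,m) + P_0(m_1,m_2−1,m_3,m) + P_1(m_1,m_2−1,m_3,m−1)], with initial conditions: both are 0 if the last argument is negative, both equal 1 if the last argument is 0, both are 0 if m_1=m_2=m_3=0 and the last argument is ≠1, P_0(0,0,0,1)=1,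 P_1(0,0,0,1)=0. Then P(m_1,m_2,m_3,m+1;q) := P_0 + P_1 is a polynomial in q with nonnegative integer coefficients for all m_1,m_2,m_3 ∈ ℕ and m ∈ ℤ. -/
/-- The pair of polynomial families `P₀` (for `b = false`) and `P₁` (for `b = true`)
defined by the recursions
`P₀(m₁,m₂,m₃,m+1) = q^{2m}[P₀(m₁-1,m₂,m₃,m) + P₁(m₁-1,m₂,m₃,m-1) + P₀(m₁-1,m₂,m₃,m-1)]
  + q^{5m-7}[P₁(m₁,m₂,m₃-1,m-3) + P₀(m₁,m₂,m₃-1,m-3) + P₁(m₁,m₂,m₃-1,m-4)]` and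
`P₁(m₁,m₂,m₃,m+1) = q^{2m+1}[P₁(m₁,m₂-1,m₃,m) + P₀(m₁,m₂-1,m₃,m) + P₁(m₁,m₂-1,m₃,m-1)]`
(terms with a negative parameter among `m₁, m₂, m₃` being `0`), with initial conditions:
both are `0` for negative last argument, both are `1` for last argument `0`, both are `0`
when `m₁ = m₂ = m₃ = 0` and the last argument is `≠ 1`, `P₀(0,0,0,1) = 1`,
`P₁(0,0,0,1) = 0`. -/
noncomputable def P01 (b : Bool) (m1 m2 m3 : ℕ) (n : ℤ) : Polynomial ℤ :=
  if n < 0 then 0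
  else if n = 0 then 1
  else if m1 = 0 ∧ m2 = 0 ∧ m3 = 0 then (if b = false ∧ n = 1 then 1 else 0)
  else if b = false then
    (if h1 : m1 = 0 then 0 else
      Polynomial.X ^ (2 * (n - 1)).toNat *
        (P01 false (m1 - 1) m2 m3 (n - 1) + P01 true (m1 - 1) m2 m3 (n - 2) +
          P01 false (m1 - 1) m2 m3 (n - 2)))
    + (if h3 : m3 = 0 then 0 else
      Polynomial.X ^ (5 * (n - 1) - 7).toNat *
        (P01 true m1 m2 (m3 - 1) (n - 4) + P01 false m1 m2 (m3 - 1) (n - 4) +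
          P01 true m1 m2 (m3 - 1) (n - 5)))
  else
    (if h2 : m2 = 0 then 0 else
      Polynomial.X ^ (2 * (n - 1) + 1).toNat *
        (P01 true m1 (m2 - 1) m3 (n - 1) + P01 false m1 (m2 - 1) m3 (n - 1) +
          P01 true m1 (m2 - 1) m3 (n - 2)))
termination_by (m1 + m2 + m3)
decreasing_by all_goals omega

lemma coeff_X_pow_mul_nonneg (k : ℕ) (p : Polynomial ℤ) (h : ∀ j, 0 ≤ p.coeff j) (i : ℕ) :
    0 ≤ (Polynomial.X ^ k * p).coeff i := by
  rw [mul_comm, Polynomial.coeff_mul_X_pow']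
  split_ifs with hk
  · exact h _
  · exact le_refl 0

lemma P01_coeff_nonneg : ∀ (s : ℕ) (b : Bool) (m1 m2 m3 : ℕ), m1 + m2 + m3 ≤ s →
    ∀ (n : ℤ) (i : ℕ), 0 ≤ (P01 b m1 m2 m3 n).coeff i := by
  intro s
  induction s with
  | zero =>
    intro b m1 m2 m3 h n i
    obtain ⟨rfl, rfl, rfl⟩ : m1 = 0 ∧ m2 = 0 ∧ m3 = 0 := by omega
    rw [P01]
    split_ifs <;> simp_all [Polynomial.coeff_one] <;> positivity
  | succ s ih =>
    intro b m1 m2 m3 h n i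
    rw [P01]
    by_cases hn : n < 0
    · simp [hn]
    rw [if_neg hn]
    by_cases hn0 : n = 0
    · simp only [if_pos hn0, Polynomial.coeff_one]
      positivity
    rw [if_neg hn0]
    by_cases hm : m1 = 0 ∧ m2 = 0 ∧ m3 = 0
    · rw [if_pos hm]; split_ifs <;> simp [Polynomial.coeff_one] <;> positivity
    rw [if_neg hm]
    by_cases hb : b = false
    · rw [if_pos hb, Polynomial.coeff_add]
      have t1 : 0 ≤ (if _ : m1 = 0 then (0 : Polynomial ℤ) else
        Polynomial.X ^ (2 * (n - 1)).toNat *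
          (P01 false (m1 - 1) m2 m3 (n - 1) + P01 true (m1 - 1) m2 m3 (n - 2) +
            P01 false (m1 - 1) m2 m3 (n - 2))).coeff i := by
        by_cases h1 : m1 = 0
        · rw [dif_pos h1]; simp
        · rw [dif_neg h1]
          refine coeff_X_pow_mul_nonneg _ _ (fun j => ?_) i
          simp only [Polynomial.coeff_add]
          have a1 := ih false (m1-1) m2 m3 (by omega) (n-1) j
          have a2 := ih true (m1-1) m2 m3 (by omega) (n-2) j
          have a3 := ih false (m1-1) m2 m3 (by omega) (n-2) j
          linarith
      have t2 : 0 ≤ (if _ : m3 = 0 then (0 : Polynomial ℤ) else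
        Polynomial.X ^ (5 * (n - 1) - 7).toNat *
          (P01 true m1 m2 (m3 - 1) (n - 4) + P01 false m1 m2 (m3 - 1) (n - 4) +
            P01 true m1 m2 (m3 - 1) (n - 5))).coeff i := by
        by_cases h3 : m3 = 0
        · rw [dif_pos h3]; simp
        · rw [dif_neg h3]
          refine coeff_X_pow_mul_nonneg _ _ (fun j => ?_) i
          simp only [Polynomial.coeff_add]
          have a1 := ih true m1 m2 (m3-1) (by omega) (n-4) j
          have a2 := ih false m1 m2 (m3-1) (by omega) (n-4) j
          have a3 := ih true m1 m2 (m3-1) (by omega) (n-5) j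
          linarith
      linarith
    · rw [if_neg hb]
      by_cases h2 : m2 = 0
      · rw [dif_pos h2]; simp
      · rw [dif_neg h2]
        refine coeff_X_pow_mul_nonneg _ _ (fun j => ?_) i
        simp only [Polynomial.coeff_add]
        have a1 := ih true m1 (m2-1) m3 (by omega) (n-1) j
        have a2 := ih false m1 (m2-1) m3 (by omega) (n-1) j
        have a3 := ih true m1 (m2-1) m3 (by omega) (n-2) j
        linarith

/-- `P(m₁,m₂,m₃,m+1;q) := P₀(m₁,m₂,m₃,m+1;q) + P₁(m₁,m₂,m₃,m+1;q)` is a polynomial in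
`q` with nonnegative integer coefficients, for all `m₁, m₂, m₃ ∈ ℕ` and `m ∈ ℤ`. -/
theorem P_coeff_nonneg (m1 m2 m3 : ℕ) (m : ℤ) (i : ℕ) :
    0 ≤ (P01 false m1 m2 m3 (m + 1) + P01 true m1 m2 m3 (m + 1)).coeff i := by
  rw [Polynomial.coeff_add]
  have a1 := P01_coeff_nonneg (m1+m2+m3) false m1 m2 m3 le_rfl (m+1) i
  have a2 := P01_coeff_nonneg (m1+m2+m3) true m1 m2 m3 le_rfl (m+1) i
  linarith
end
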